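/- arXiv:math/0110178 — 8 statements merged into one kernel-verified Lean document; each statement's English description precedes it below -/
import Mathlib

section
/- Let a_{n,j} denote the number of Carlitz compositions of n having no part equal to j. For every fixed positive integer j, the ordinary generating function of the sequence (a_{n,j})_{n≥0} satisfies C_j(z) = 1/(1-σ_j(z)); equivalently, as an identity of formal power series, (1 - σ_j(X)) · ∑_{n≥0} a_{n,j} X^n = 1, where σ_j(X) = ∑_{ℓ≥1} (-1)^{ℓ-1} ( X^ℓ/(1-X^ℓ) - X^{ℓj} ) and X^ℓ/(1-X^ℓ) denotes the formal power series ∑_{m≥1} X^{ℓm}. -/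
/-- A list of natural numbers is a composition of `n` if all its entries are
positive and they sum to `n`. -/
def IsComposition (n : ℕ) (L : List ℕ) : Prop :=
  (∀ x ∈ L, 0 < x) ∧ L.sum = n

/-- A composition is Carlitz if adjacent parts are different. -/
def IsCarlitz (L : List ℕ) : Prop :=
  L.Chain' (· ≠ ·)

/-- `carlitzCountAvoid n j` is the number of Carlitz compositions of `n`
having no part equal to `j`.  (For `n = 0` this equals `1`, counting the
empty composition.) -/
noncomputable def carlitzCountAvoid (n j : ℕ) : ℕ :=
  Nat.card {L : List ℕ // IsComposition n L ∧ IsCarlitz L ∧ j ∉ L}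

/-- The formal power series
`σ_j(X) = ∑_{ℓ ≥ 1} (-1)^{ℓ-1} (X^ℓ/(1-X^ℓ) - X^{ℓ j})`, where
`X^ℓ/(1-X^ℓ)` stands for `∑_{m ≥ 1} X^{ℓ m}`.  The coefficient of `X^n`
receives the contribution `(-1)^{ℓ-1}` from `X^ℓ/(1-X^ℓ)` exactly when
`ℓ ∣ n`, and the contribution `-(-1)^{ℓ-1}` from `X^{ℓ j}` exactly when
`ℓ * j = n`; only the finitely many `ℓ` with `1 ≤ ℓ ≤ n` contribute. -/
noncomputable def sigmaJPS (j : ℕ) : PowerSeries ℤ :=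
  PowerSeries.mk fun n =>
    ∑ ℓ ∈ Finset.Icc 1 n,
      (-1 : ℤ) ^ (ℓ - 1) *
        ((if ℓ ∣ n then 1 else 0) - (if ℓ * j = n then 1 else 0))

/-!
Split the Carlitz compositions of `n` avoiding `j` by their first part `m ≠ j`, and let
`B_m` be the generating function of those starting with `m`. Removing the first part maps
the compositions of `n + m` starting with `m` bijectively onto the compositions of `n` not
starting with `m`, so `B_m = X^m (C_j - B_m)`, i.e. `B_m = X^m/(1+X^m) · C_j`. Summing over
`m ≠ j` gives `C_j - 1 = σ_j C_j`, because `σ_j = ∑_{m ≥ 1, m ≠ j} X^m/(1+X^m)`: expanding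
`X^m/(1+X^m) = ∑_{ℓ ≥ 1} (-1)^{ℓ-1} X^{ℓm}` and summing over all `m ≥ 1` gives the
divisor sum `∑_{ℓ ∣ k} (-1)^{ℓ-1}` as coefficient of `X^k`, and the term `m = j` is the
series `∑_{ℓ ≥ 1} (-1)^{ℓ-1} X^{ℓj}`.
-/

open Finset PowerSeries

section

variable {n : ℕ} {L : List ℕ}

theorem IsComposition.le_of_mem {x : ℕ} (hL : IsComposition n L) (hx : x ∈ L) : x ≤ n :=
  hL.2 ▸ List.le_sum_of_mem hx

theorem isComposition_cons_iff {x : ℕ} :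
    IsComposition (n + x) (x :: L) ↔ 0 < x ∧ IsComposition n L := by
  simp only [IsComposition, List.mem_cons, forall_eq_or_imp, List.sum_cons, add_comm x,
    Nat.add_right_cancel_iff, and_assoc]

theorem isCarlitz_cons_iff {x : ℕ} :
    IsCarlitz (x :: L) ↔ L.head? ≠ some x ∧ IsCarlitz L := by
  change List.IsChain (· ≠ ·) (x :: L) ↔ L.head? ≠ some x ∧ List.IsChain (· ≠ ·) L
  simp only [List.isChain_cons, Option.mem_def]
  exact and_congr_left' ⟨fun h hx => h x hx rfl, fun h y hy hxy => h (hxy ▸ hy)⟩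

end

theorem PowerSeries.coeff_mul_congr_left {R : Type*} [Semiring R] {f g h : R⟦X⟧} {n : ℕ}
    (hfg : ∀ k ≤ n, coeff k f = coeff k g) : coeff n (f * h) = coeff n (g * h) := by
  simp only [coeff_mul]
  exact sum_congr rfl fun p hp => by rw [hfg p.1 (HasAntidiagonal.antidiagonal.fst_le hp)]

namespace Carlitz

variable {j m n : ℕ} {L : List ℕ}

theorem finite_setOf_carlitz (j n : ℕ) :
    {L : List ℕ | IsComposition n L ∧ IsCarlitz L ∧ j ∉ L}.Finite := by
  rw [← Set.finite_coe_iff]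
  refine Finite.of_injective
    (fun L => (⟨L.1, fun hi => L.2.1.1 _ hi, L.2.1.2⟩ : Composition n)) fun L₁ L₂ h => ?_
  exact Subtype.ext (congrArg Composition.blocks h)

noncomputable def avoiding (j n : ℕ) : Finset (List ℕ) :=
  (finite_setOf_carlitz j n).toFinset

theorem mem_avoiding : L ∈ avoiding j n ↔ IsComposition n L ∧ IsCarlitz L ∧ j ∉ L :=
  Set.Finite.mem_toFinset _

theorem carlitzCountAvoid_eq_card (j n : ℕ) : carlitzCountAvoid n j = #(avoiding j n) := by
  rw [carlitzCountAvoid, avoiding, ← Set.ncard_eq_toFinset_card _ (finite_setOf_carlitz j n),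
    ← Nat.card_coe_set_eq]
  rfl

theorem avoiding_zero (j : ℕ) : avoiding j 0 = {[]} := by
  ext L
  rw [mem_avoiding, mem_singleton]
  constructor
  · rintro ⟨hL, -, -⟩
    exact List.eq_nil_iff_forall_not_mem.2 fun x hx =>
      (hL.1 x hx).ne' (Nat.le_zero.1 (hL.le_of_mem hx))
  · rintro rfl
    exact ⟨⟨by simp, rfl⟩, List.isChain_nil, List.not_mem_nil⟩

theorem cons_mem_avoiding_iff (hm : 0 < m) (hmj : m ≠ j) :
    m :: L ∈ avoiding j (n + m) ↔ L ∈ avoiding j n ∧ L.head? ≠ some m := by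
  simp only [mem_avoiding, isComposition_cons_iff, isCarlitz_cons_iff, List.mem_cons, not_or]
  tauto

noncomputable def firstPartCount (j m n : ℕ) : ℕ :=
  #{L ∈ avoiding j n | L.head? = some m}

theorem firstPartCount_of_lt (h : n < m) : firstPartCount j m n = 0 := by
  refine card_eq_zero.2 (filter_eq_empty_iff.2 fun L hL hhead => ?_)
  exact h.not_ge ((mem_avoiding.1 hL).1.le_of_mem (List.mem_of_mem_head? hhead))

theorem firstPartCount_add_firstPartCount_eq_card (hm : 0 < m) (hmj : m ≠ j) :
    firstPartCount j m (n + m) + firstPartCount j m n = #(avoiding j n) := by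
  have hdrop : firstPartCount j m (n + m) = #{L ∈ avoiding j n | ¬L.head? = some m} := by
    refine card_nbij' List.tail (m :: ·) (fun L hL => ?_) (fun L hL => ?_)
      (fun L hL => List.cons_head?_tail (mem_filter.1 hL).2) fun L _ => rfl
    · obtain ⟨hL, hhead⟩ := mem_filter.1 hL
      rw [← List.cons_head?_tail hhead, cons_mem_avoiding_iff hm hmj] at hL
      exact mem_filter.2 hL
    · exact mem_filter.2 ⟨(cons_mem_avoiding_iff hm hmj).2 (mem_filter.1 hL), rfl⟩
  rw [hdrop, firstPartCount, add_comm]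
  exact card_filter_add_card_filter_not _

theorem card_avoiding_eq_sum_firstPartCount (hn : n ≠ 0) :
    #(avoiding j n) = ∑ m ∈ (Icc 1 n).erase j, firstPartCount j m n := by
  have hcons : ∀ L ∈ avoiding j n, L = L.headI :: L.tail := fun L hL => by
    cases L with
    | nil => exact absurd (mem_avoiding.1 hL).1.2 (Ne.symm hn)
    | cons x t => rfl
  have hhead : ∀ L ∈ avoiding j n, L.headI ∈ (Icc 1 n).erase j := fun L hL => by
    have hmem : L.headI ∈ L := by rw [hcons L hL]; exact List.mem_cons_self
    obtain ⟨hcomp, -, hj⟩ := mem_avoiding.1 hL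
    exact mem_erase.2 ⟨fun h => hj (h ▸ hmem),
      mem_Icc.2 ⟨hcomp.1 _ hmem, hcomp.le_of_mem hmem⟩⟩
  rw [card_eq_sum_card_fiberwise hhead]
  refine sum_congr rfl fun m _ => congrArg card (filter_congr fun L hL => ?_)
  rw [hcons L hL]
  simp

/-- The expansion `X^m / (1 + X^m) = ∑_{ℓ ≥ 1} (-1)^(ℓ-1) X^(ℓ m)`. -/
noncomputable def alternatingGeom (m : ℕ) : ℤ⟦X⟧ :=
  mk fun k => if m ∣ k ∧ k ≠ 0 then (-1) ^ (k / m - 1) else 0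

theorem one_add_X_pow_mul_alternatingGeom {m : ℕ} (hm : 0 < m) :
    (1 + X ^ m) * alternatingGeom m = X ^ m := by
  ext k
  rw [add_mul, one_mul, map_add, coeff_X_pow_mul', coeff_X_pow]
  simp only [alternatingGeom, coeff_mk]
  rcases lt_or_ge k m with hk | hk
  · have hndvd : ¬(m ∣ k ∧ k ≠ 0) := fun h =>
      hk.not_ge (Nat.le_of_dvd (Nat.pos_of_ne_zero h.2) h.1)
    simp [hndvd, hk.not_ge, hk.ne]
  obtain ⟨r, rfl⟩ := Nat.exists_eq_add_of_le' hk
  simp only [Nat.add_sub_cancel, if_pos hk, Nat.dvd_add_self_right, Nat.add_div_right _ hm]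
  rcases eq_or_ne r 0 with rfl | hr
  · simp [hm.ne']
  by_cases hdvd : m ∣ r
  · obtain ⟨q, hq⟩ : ∃ q, r / m = q + 1 :=
      Nat.exists_eq_add_one.2 (Nat.div_pos (Nat.le_of_dvd (Nat.pos_of_ne_zero hr) hdvd) hm)
    simp [hdvd, hr, hq, pow_succ]
  · simp [hdvd, hr]

theorem sum_coeff_alternatingGeom {k N : ℕ} (hk : k ≤ N) :
    ∑ m ∈ Icc 1 N, coeff k (alternatingGeom m)
      = ∑ ℓ ∈ Icc 1 k, (-1 : ℤ) ^ (ℓ - 1) * if ℓ ∣ k then 1 else 0 := by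
  have hdiv : k.divisors ⊆ Icc 1 N := fun d hd =>
    mem_Icc.2 ⟨Nat.pos_of_mem_divisors hd, (Nat.divisor_le hd).trans hk⟩
  simp only [alternatingGeom, coeff_mk, ← Nat.mem_divisors, mul_ite, mul_one, mul_zero]
  rw [sum_ite_mem, inter_eq_right.2 hdiv, Nat.sum_div_divisors k fun ℓ => (-1 : ℤ) ^ (ℓ - 1),
    ← sum_filter, ← Ico_add_one_right_eq_Icc]
  rfl

theorem coeff_alternatingGeom_eq_sum (j k : ℕ) :
    coeff k (alternatingGeom j)
      = ∑ ℓ ∈ Icc 1 k, (-1 : ℤ) ^ (ℓ - 1) * if ℓ * j = k then 1 else 0 := by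
  simp only [alternatingGeom, coeff_mk, mul_ite, mul_one, mul_zero]
  split_ifs with h
  · obtain ⟨⟨q, rfl⟩, hk⟩ := h
    have hj : j ≠ 0 := by rintro rfl; simp at hk
    have hq : q ≠ 0 := by rintro rfl; simp at hk
    simp_rw [mul_comm _ j, Nat.mul_left_cancel_iff (Nat.pos_of_ne_zero hj), sum_ite_eq']
    have hqk : q ∈ Icc 1 (j * q) :=
      mem_Icc.2 ⟨Nat.pos_of_ne_zero hq, Nat.le_mul_of_pos_left q (Nat.pos_of_ne_zero hj)⟩
    rw [if_pos hqk, Nat.mul_div_cancel_left _ (Nat.pos_of_ne_zero hj)]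
  · refine (sum_eq_zero fun ℓ hℓ => if_neg fun hℓj => h ⟨⟨ℓ, ?_⟩, ?_⟩).symm
    · rw [← hℓj, mul_comm]
    · have := mem_Icc.1 hℓ
      omega

theorem coeff_sigmaJPS {j k N : ℕ} (hk : k ≤ N) :
    coeff k (sigmaJPS j) = ∑ m ∈ (Icc 1 N).erase j, coeff k (alternatingGeom m) := by
  have hsigma : coeff k (sigmaJPS j)
      = ∑ m ∈ Icc 1 N, coeff k (alternatingGeom m) - coeff k (alternatingGeom j) := by
    rw [sum_coeff_alternatingGeom hk, coeff_alternatingGeom_eq_sum, ← sum_sub_distrib]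
    simp only [sigmaJPS, coeff_mk, mul_sub]
  by_cases hj : j ∈ Icc 1 N
  · rw [hsigma, sum_erase_eq_sub hj]
  · have hzero : coeff k (alternatingGeom j) = 0 := by
      simp only [alternatingGeom, coeff_mk]
      refine if_neg fun h => hj (mem_Icc.2 ⟨Nat.pos_of_dvd_of_pos h.1 ?_, ?_⟩)
      · exact Nat.pos_of_ne_zero h.2
      · exact (Nat.le_of_dvd (Nat.pos_of_ne_zero h.2) h.1).trans hk
    rw [hsigma, hzero, sub_zero, sum_erase (f := fun m => coeff k (alternatingGeom m)) _ hzero]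

noncomputable def carlitzSeries (j : ℕ) : ℤ⟦X⟧ :=
  mk fun n => (carlitzCountAvoid n j : ℤ)

noncomputable def firstPartSeries (j m : ℕ) : ℤ⟦X⟧ :=
  mk fun n => (firstPartCount j m n : ℤ)

theorem one_add_X_pow_mul_firstPartSeries (hm : 0 < m) (hmj : m ≠ j) :
    (1 + X ^ m) * firstPartSeries j m = X ^ m * carlitzSeries j := by
  ext k
  rw [add_mul, one_mul, map_add, coeff_X_pow_mul', coeff_X_pow_mul']
  simp only [firstPartSeries, carlitzSeries, coeff_mk]
  split_ifs with hk
  · obtain ⟨n, rfl⟩ := Nat.exists_eq_add_of_le' hk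
    rw [Nat.add_sub_cancel, carlitzCountAvoid_eq_card,
      ← firstPartCount_add_firstPartCount_eq_card hm hmj]
    push_cast
    rfl
  · simp [firstPartCount_of_lt (not_le.1 hk)]

theorem firstPartSeries_eq_alternatingGeom_mul (hm : 0 < m) (hmj : m ≠ j) :
    firstPartSeries j m = alternatingGeom m * carlitzSeries j := by
  have hne : (1 + X ^ m : ℤ⟦X⟧) ≠ 0 := fun h => by
    simpa [hm.ne'] using congrArg (coeff 0) h
  refine mul_left_cancel₀ hne ?_
  rw [one_add_X_pow_mul_firstPartSeries hm hmj, ← mul_assoc,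
    one_add_X_pow_mul_alternatingGeom hm]

theorem coeff_sigmaJPS_mul_carlitzSeries (j n : ℕ) :
    coeff n (sigmaJPS j * carlitzSeries j)
      = ∑ m ∈ (Icc 1 n).erase j, (firstPartCount j m n : ℤ) := by
  rw [coeff_mul_congr_left (g := ∑ m ∈ (Icc 1 n).erase j, alternatingGeom m)
    fun k hk => by rw [coeff_sigmaJPS hk, map_sum], sum_mul, map_sum]
  refine sum_congr rfl fun m hm => ?_
  obtain ⟨hmj, hm⟩ := mem_erase.1 hm
  rw [← firstPartSeries_eq_alternatingGeom_mul (mem_Icc.1 hm).1 hmj, firstPartSeries, coeff_mk]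

end Carlitz

theorem carlitz_avoid_generating_function_general (j : ℕ) :
    (1 - sigmaJPS j) * PowerSeries.mk (fun n => (carlitzCountAvoid n j : ℤ)) = 1 := by
  change (1 - sigmaJPS j) * Carlitz.carlitzSeries j = 1
  ext n
  rw [sub_mul, one_mul, map_sub, Carlitz.coeff_sigmaJPS_mul_carlitzSeries, coeff_one,
    Carlitz.carlitzSeries, coeff_mk, Carlitz.carlitzCountAvoid_eq_card]
  rcases eq_or_ne n 0 with rfl | hn
  · simp [Carlitz.avoiding_zero]
  · rw [Carlitz.card_avoiding_eq_sum_firstPartCount hn, if_neg hn]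
    push_cast
    exact sub_self _

/-- The generating function `C_j(z) = ∑_{n ≥ 0} a_{n,j} z^n` of the numbers of
Carlitz compositions avoiding the part `j` satisfies
`(1 - σ_j(X)) · C_j(X) = 1`, i.e. `C_j(X) = 1/(1 - σ_j(X))`. -/
theorem carlitz_avoid_generating_function (j : ℕ) (hj : 1 ≤ j) :
    (1 - sigmaJPS j) * PowerSeries.mk (fun n => (carlitzCountAvoid n j : ℤ)) = 1 :=
  carlitz_avoid_generating_function_general j
end

section
/- Let a_n denote the number of Carlitz compositions of n (with a_0 = 1). Then, as an identity of formal power series, (1 - σ(X)) · ∑_{n≥0} a_n X^n = 1, where σ(X) = ∑_{ℓ≥1} (-1)^{ℓ-1} X^ℓ/(1-X^ℓ) and X^ℓ/(1-X^ℓ) denotes the formal power series ∑_{m≥1} X^{ℓm}. -/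
/-- `carlitzCount n` is the number of Carlitz compositions of `n`.
(For `n = 0` this equals `1`, counting the empty composition.) -/
noncomputable def carlitzCount (n : ℕ) : ℕ :=
  Nat.card {L : List ℕ // IsComposition n L ∧ IsCarlitz L}

/-- The formal power series `σ(X) = ∑_{ℓ ≥ 1} (-1)^{ℓ-1} X^ℓ/(1-X^ℓ)`, where
`X^ℓ/(1-X^ℓ)` stands for `∑_{m ≥ 1} X^{ℓ m}`.  The coefficient of `X^n`
receives the contribution `(-1)^{ℓ-1}` exactly when `ℓ ∣ n`; only the
finitely many `ℓ` with `1 ≤ ℓ ≤ n` contribute. -/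
noncomputable def sigmaPS : PowerSeries ℤ :=
  PowerSeries.mk fun n =>
    ∑ ℓ ∈ Finset.Icc 1 n, (-1 : ℤ) ^ (ℓ - 1) * (if ℓ ∣ n then 1 else 0)

open Finset

def comps : ℕ → Finset (List ℕ)
  | 0 => {[]}
  | (n+1) => (Finset.Icc 1 (n+1)).attach.biUnion fun j =>
      (comps (n+1 - j.1)).image (j.1 :: ·)
  decreasing_by
    have := (Finset.mem_Icc.mp j.2).1
    omega

theorem mem_comps : ∀ n L, L ∈ comps n ↔ IsComposition n L := by
  intro n
  induction n using Nat.strong_induction_on with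
  | _ n ih =>
    intro L
    match n with
    | 0 =>
      simp only [comps, Finset.mem_singleton, IsComposition]
      constructor
      · rintro rfl; simp
      · rintro ⟨hpos, hsum⟩
        cases L with
        | nil => rfl
        | cons a M =>
          exfalso
          have := hpos a (by simp)
          simp at hsum; omega
    | (m+1) =>
      simp only [comps, Finset.mem_biUnion, Finset.mem_attach, Finset.mem_image, true_and,
        Subtype.exists, Finset.mem_Icc]
      constructor
      · rintro ⟨j, ⟨hj1, hj2⟩, M, hM, rfl⟩
        have hM' := (ih _ (by omega) M).mp hM
        refine ⟨?_, ?_⟩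
        · intro x hx
          rcases List.mem_cons.mp hx with rfl | hx
          · omega
          · exact hM'.1 x hx
        · simp [hM'.2]; omega
      · rintro ⟨hpos, hsum⟩
        cases L with
        | nil => simp at hsum
        | cons j M =>
          have hj : 0 < j := hpos j (by simp)
          simp only [List.sum_cons] at hsum
          refine ⟨j, ⟨hj, by omega⟩, M, ?_, rfl⟩
          exact (ih _ (by omega) M).mpr ⟨fun x hx => hpos x (List.mem_cons_of_mem _ hx), by omega⟩

instance instDecidableChain'Carlitz {α : Type*} (R : α → α → Prop) [DecidableRel R] (l : List α) :
    Decidable (l.Chain' R) :=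
  inferInstanceAs (Decidable (l.IsChain R))

def aC (n : ℕ) : ℕ := ((comps n).filter (fun L => L.Chain' (· ≠ ·))).card

def bC (n j : ℕ) : ℕ :=
  ((comps n).filter (fun L => L.Chain' (· ≠ ·) ∧ L.head? = some j)).card


theorem carlitzCount_eq (n : ℕ) : carlitzCount n = aC n := by
  rw [carlitzCount, aC, ← Nat.card_eq_finsetCard]
  exact Nat.card_congr (Equiv.subtypeEquivRight (fun L => by
    simp [mem_comps, IsCarlitz, and_comm]))

theorem aC_zero : aC 0 = 1 := by
  simp [aC, comps, Finset.filter_singleton, List.Chain']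

theorem comps_ne_nil {n : ℕ} {L : List ℕ} (hn : 1 ≤ n) (hL : L ∈ comps n) : L ≠ [] := by
  rintro rfl
  have := (mem_comps n []).mp hL
  simp [IsComposition] at this
  omega

theorem head_le {n : ℕ} {j : ℕ} {M : List ℕ} (hL : (j :: M) ∈ comps n) : 1 ≤ j ∧ j ≤ n := by
  have h := (mem_comps n _).mp hL
  have h1 := h.1 j (by simp)
  have h2 := h.2
  simp only [List.sum_cons] at h2
  omega

theorem bC_eq_zero {n j : ℕ} (h : n < j) : bC n j = 0 := by
  rw [bC, Finset.card_eq_zero, Finset.filter_eq_empty_iff]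
  rintro L hL ⟨-, hhead⟩
  cases L with
  | nil => simp at hhead
  | cons a M =>
    simp only [List.head?_cons, Option.some.injEq] at hhead
    subst hhead
    have := head_le hL
    omega

theorem cons_mem_comps {n j : ℕ} (hj : 1 ≤ j) (hjn : j ≤ n) (M : List ℕ) :
    (j :: M) ∈ comps n ↔ M ∈ comps (n - j) := by
  simp only [mem_comps, IsComposition]
  constructor
  · rintro ⟨hpos, hsum⟩
    simp only [List.sum_cons] at hsum
    exact ⟨fun x hx => hpos x (List.mem_cons_of_mem _ hx), by omega⟩
  · rintro ⟨hpos, hsum⟩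
    refine ⟨?_, ?_⟩
    · intro x hx
      rcases List.mem_cons.mp hx with rfl | hx
      · omega
      · exact hpos x hx
    · simp only [List.sum_cons]; omega

theorem bC_rec {n j : ℕ} (hj : 1 ≤ j) (hjn : j ≤ n) :
    bC n j + bC (n - j) j = aC (n - j) := by
  classical
  have hsplit := Finset.card_filter_add_card_filter_not
    (s := (comps (n - j)).filter (fun L => L.Chain' (· ≠ ·)))
    (p := fun L => L.head? = some j)
  rw [Finset.filter_filter, Finset.filter_filter] at hsplit
  have h1 : bC (n - j) j
      = ((comps (n-j)).filter (fun L => L.Chain' (· ≠ ·) ∧ L.head? = some j)).card := rfl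
  have key : bC n j
      = ((comps (n-j)).filter (fun L => L.Chain' (· ≠ ·) ∧ ¬ L.head? = some j)).card := by
    rw [bC]
    apply Finset.card_bij' (fun L _ => L.tail) (fun M _ => j :: M)
    · intro L hL
      simp only [Finset.mem_filter] at hL ⊢
      obtain ⟨hmem, hchain, hhead⟩ := hL
      cases L with
      | nil => simp at hhead
      | cons a M =>
        simp only [Option.some.injEq, List.head?_cons] at hhead
        unfold List.Chain' at hchain
        rw [List.isChain_cons] at hchain
        rw [hhead] at hmem hchain
        refine ⟨(cons_mem_comps hj hjn M).mp hmem, hchain.2, ?_⟩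
        intro hM
        exact hchain.1 j hM rfl
    · intro M hM
      simp only [Finset.mem_filter] at hM ⊢
      obtain ⟨hmem, hchain, hhead⟩ := hM
      refine ⟨(cons_mem_comps hj hjn M).mpr hmem, ?_, by simp⟩
      unfold List.Chain'
      rw [List.isChain_cons]
      refine ⟨?_, hchain⟩
      intro b hb hjb
      exact hhead (by rw [hjb]; exact hb)
    · intro L hL
      simp only [Finset.mem_filter] at hL
      obtain ⟨-, -, hhead⟩ := hL
      cases L with
      | nil => simp at hhead
      | cons a M =>
        simp only [Option.some.injEq, List.head?_cons] at hhead
        subst hhead; rfl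
    · intro M _; rfl
  rw [key, h1, aC, add_comm]
  exact hsplit

theorem aC_split {n : ℕ} (hn : 1 ≤ n) : aC n = ∑ j ∈ Finset.Icc 1 n, bC n j := by
  classical
  rw [aC]
  rw [Finset.card_eq_sum_card_fiberwise (f := fun L => L.headI) (t := Finset.Icc 1 n)]
  · apply Finset.sum_congr rfl
    intro j hj
    rw [bC, Finset.filter_filter]
    congr 1
    apply Finset.filter_congr
    intro L hL
    have hne : L ≠ [] := comps_ne_nil hn hL
    cases L with
    | nil => exact absurd rfl hne
    | cons a M => simp [eq_comm]
  · intro L hL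
    simp only [Finset.mem_coe, Finset.mem_filter] at hL
    have hne : L ≠ [] := comps_ne_nil hn hL.1
    cases L with
    | nil => exact absurd rfl hne
    | cons a M =>
      have := head_le hL.1
      simp only [List.headI_cons, Finset.mem_coe, Finset.mem_Icc]
      omega

theorem bC_formula : ∀ n j : ℕ, 1 ≤ j →
    (bC n j : ℤ) = ∑ ℓ ∈ Finset.Icc 1 n,
      if ℓ * j ≤ n then (-1 : ℤ) ^ (ℓ - 1) * (aC (n - ℓ * j) : ℤ) else 0 := by
  intro n
  induction n using Nat.strong_induction_on with
  | _ n ih =>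
    intro j hj
    by_cases hjn : j ≤ n
    · -- main case
      have hn1 : 1 ≤ n := le_trans hj hjn
      have hrec := bC_rec hj hjn
      have hIH := ih (n - j) (by omega) j hj
      have hins : Finset.Icc 1 n = insert 1 (Finset.Icc 2 n) := by
        ext x; simp only [Finset.mem_Icc, Finset.mem_insert]; omega
      have hnotmem : (1 : ℕ) ∉ Finset.Icc 2 n := by simp
      have hmap : Finset.Icc 2 n
          = (Finset.Icc 1 (n - 1)).map ⟨(· + 1), add_left_injective 1⟩ := by
        ext x
        simp only [Finset.mem_Icc, Finset.mem_map, Function.Embedding.coeFn_mk]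
        constructor
        · intro h; exact ⟨x - 1, by omega, by omega⟩
        · rintro ⟨a, ha, rfl⟩; omega
      rw [hins, Finset.sum_insert hnotmem, hmap, Finset.sum_map]
      simp only [Function.Embedding.coeFn_mk]
      have h1 : (if 1 * j ≤ n then (-1 : ℤ) ^ (1 - 1) * (aC (n - 1 * j) : ℤ) else 0)
          = (aC (n - j) : ℤ) := by
        rw [if_pos (by omega)]; simp
      rw [h1]
      have h2 : ∀ ℓ ∈ Finset.Icc 1 (n - 1),
          (if (ℓ + 1) * j ≤ n then (-1 : ℤ) ^ (ℓ + 1 - 1) * (aC (n - (ℓ + 1) * j) : ℤ) else 0)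
          = -(if ℓ * j ≤ n - j then (-1 : ℤ) ^ (ℓ - 1) * (aC (n - j - ℓ * j) : ℤ) else 0) := by
        intro ℓ hℓ
        simp only [Finset.mem_Icc] at hℓ
        have hmul : (ℓ + 1) * j = ℓ * j + j := by ring
        rw [hmul]
        by_cases hc : ℓ * j + j ≤ n
        · rw [if_pos hc, if_pos (by omega)]
          have hsub : n - (ℓ * j + j) = n - j - ℓ * j := by omega
          rw [hsub]
          obtain ⟨m, rfl⟩ : ∃ m, ℓ = m + 1 := ⟨ℓ - 1, by omega⟩
          simp only [Nat.add_sub_cancel]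
          rw [pow_succ]
          ring
        · rw [if_neg hc, if_neg (by omega), neg_zero]
      rw [Finset.sum_congr rfl h2]
      have h3 : ∑ ℓ ∈ Finset.Icc 1 (n - 1),
          -(if ℓ * j ≤ n - j then (-1 : ℤ) ^ (ℓ - 1) * (aC (n - j - ℓ * j) : ℤ) else 0)
          = ∑ ℓ ∈ Finset.Icc 1 (n - j),
          -(if ℓ * j ≤ n - j then (-1 : ℤ) ^ (ℓ - 1) * (aC (n - j - ℓ * j) : ℤ) else 0) := by
        symm
        apply Finset.sum_subset
        · apply Finset.Icc_subset_Icc_right; omega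
        · intro ℓ hℓ hℓ'
          simp only [Finset.mem_Icc] at hℓ hℓ'
          have : ℓ ≤ ℓ * j := Nat.le_mul_of_pos_right ℓ (by omega)
          rw [if_neg (by omega), neg_zero]
      rw [h3, Finset.sum_neg_distrib, ← hIH]
      omega
    · -- n < j
      rw [bC_eq_zero (by omega)]
      symm
      rw [Finset.sum_eq_zero]
      · simp
      · intro ℓ hℓ
        simp only [Finset.mem_Icc] at hℓ
        have : j ≤ ℓ * j := Nat.le_mul_of_pos_left j (by omega)
        rw [if_neg (by omega)]

theorem aC_identity {n : ℕ} (hn : 1 ≤ n) :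
    (aC n : ℤ) = ∑ k ∈ Finset.Icc 1 n,
      (∑ ℓ ∈ Finset.Icc 1 k, (-1 : ℤ) ^ (ℓ - 1) * (if ℓ ∣ k then 1 else 0))
        * (aC (n - k) : ℤ) := by
  -- rewrite RHS
  have hR : ∀ k ∈ Finset.Icc 1 n,
      (∑ ℓ ∈ Finset.Icc 1 k, (-1 : ℤ) ^ (ℓ - 1) * (if ℓ ∣ k then 1 else 0))
        * (aC (n - k) : ℤ)
      = ∑ ℓ ∈ Finset.Icc 1 n,
          (if ℓ ∣ k then (-1 : ℤ) ^ (ℓ - 1) * (aC (n - k) : ℤ) else 0) := by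
    intro k hk
    simp only [Finset.mem_Icc] at hk
    rw [Finset.sum_mul]
    rw [Finset.sum_subset (Finset.Icc_subset_Icc_right hk.2)]
    · apply Finset.sum_congr rfl
      intro ℓ _
      by_cases hd : ℓ ∣ k
      · rw [if_pos hd, if_pos hd]; ring
      · rw [if_neg hd, if_neg hd]; ring
    · intro ℓ hℓ hℓ'
      simp only [Finset.mem_Icc] at hℓ hℓ'
      have hd : ¬ ℓ ∣ k := fun hd => hℓ' ⟨hℓ.1, Nat.le_of_dvd (by omega) hd⟩
      rw [if_neg hd]
      ring
  rw [Finset.sum_congr rfl hR, Finset.sum_comm]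
  -- rewrite LHS
  rw [aC_split hn, Nat.cast_sum]
  have hL : ∀ j ∈ Finset.Icc 1 n, (bC n j : ℤ)
      = ∑ ℓ ∈ Finset.Icc 1 n,
          (if ℓ * j ≤ n then (-1 : ℤ) ^ (ℓ - 1) * (aC (n - ℓ * j) : ℤ) else 0) := by
    intro j hj
    simp only [Finset.mem_Icc] at hj
    exact bC_formula n j hj.1
  rw [Finset.sum_congr rfl hL, Finset.sum_comm]
  -- match the two double sums, fiberwise in ℓ
  apply Finset.sum_congr rfl
  intro ℓ hℓ
  simp only [Finset.mem_Icc] at hℓ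
  have hℓpos : 0 < ℓ := hℓ.1
  rw [← Finset.sum_filter, ← Finset.sum_filter]
  apply Finset.sum_nbij' (i := fun j => ℓ * j) (j := fun k => k / ℓ)
  · intro j hj
    simp only [Finset.mem_filter, Finset.mem_Icc] at hj ⊢
    refine ⟨⟨?_, ?_⟩, dvd_mul_right ℓ j⟩
    · have := Nat.mul_pos hℓpos (show 0 < j by omega)
      omega
    · exact hj.2
  · intro k hk
    simp only [Finset.mem_filter, Finset.mem_Icc] at hk ⊢
    obtain ⟨⟨hk1, hk2⟩, hd⟩ := hk
    have hle : ℓ ≤ k := Nat.le_of_dvd (by omega) hd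
    have hcancel : ℓ * (k / ℓ) = k := Nat.mul_div_cancel' hd
    refine ⟨⟨?_, ?_⟩, ?_⟩
    · rw [Nat.one_le_div_iff hℓpos]; exact hle
    · exact le_trans (Nat.div_le_self k ℓ) hk2
    · rw [hcancel]; exact hk2
  · intro j _
    exact Nat.mul_div_cancel_left j hℓpos
  · intro k hk
    simp only [Finset.mem_filter, Finset.mem_Icc] at hk
    exact Nat.mul_div_cancel' hk.2
  · intro j _
    rfl

/-- The generating function of the numbers `a_n` of Carlitz compositions
satisfies `(1 - σ(X)) · ∑_{n ≥ 0} a_n X^n = 1`. -/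
theorem carlitz_generating_function :
    (1 - sigmaPS) * PowerSeries.mk (fun n => (carlitzCount n : ℤ)) = 1 := by
  ext n
  rw [sub_mul, one_mul, map_sub, PowerSeries.coeff_mul,
    Finset.Nat.sum_antidiagonal_eq_sum_range_succ_mk]
  simp only [sigmaPS, PowerSeries.coeff_mk, carlitzCount_eq]
  rcases Nat.eq_zero_or_pos n with rfl | hn
  · simp [aC_zero]
  · rw [PowerSeries.coeff_one, if_neg (by omega), sub_eq_zero, aC_identity hn]
    apply Finset.sum_subset
    · intro k hk
      simp only [Finset.mem_Icc] at hk
      simp only [Finset.mem_range]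
      omega
    · intro k hk hk'
      simp only [Finset.mem_range] at hk
      simp only [Finset.mem_Icc] at hk'
      have hk0 : k = 0 := by omega
      subst hk0
      simp
end

section
/- The equation σ(z) = 1, where σ(z) = ∑_{ℓ≥1} (-1)^{ℓ-1} z^ℓ/(1-z^ℓ), has exactly one real solution ρ in the open interval (0,1), and this solution satisfies 0.571349 < ρ < 0.571350. -/
/-!
With `f(ℓ) = z^ℓ/(1-z^ℓ)` we have `σ(z) = ∑ f(ℓ) - 2 ∑ f(2ℓ)`, and pairing `f(ℓ)` with
`f(2ℓ)` through `m/(1-m) - 2m²/(1-m²) = m/(1+m)` gives `σ(z) = ∑_{ℓ≥1} z^ℓ/(1+z^ℓ)` on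
`[0,1)`. Every term of the new series is continuous and strictly increasing in `z`, so `σ` is
continuous and strictly increasing there, and the root is bracketed by evaluating partial sums
at the two endpoints, the tail after `N` terms being at most `z^{N+1}/(1-z)`.
-/

/-- `σ(z) = ∑_{ℓ≥1} (-1)^{ℓ-1} z^ℓ/(1-z^ℓ)` for real `z`. -/
noncomputable def sigmaFn (z : ℝ) : ℝ :=
  ∑' ℓ : ℕ, (-1 : ℝ) ^ ℓ * z ^ (ℓ + 1) / (1 - z ^ (ℓ + 1))

theorem tsum_neg_one_pow_mul_eq_tsum_sub {α : Type*} [NormedRing α] [CompleteSpace α]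
    {f : ℕ → α} (hf : Summable f) :
    ∑' k, (-1) ^ k * f k = ∑' k, (f k - 2 * f (2 * k + 1)) := by
  have he : Summable fun k ↦ f (2 * k) := hf.comp_injective fun a b h ↦ by omega
  have ho : Summable fun k ↦ f (2 * k + 1) := hf.comp_injective fun a b h ↦ by omega
  have hsign : ∀ k, (-1 : α) ^ (2 * k) = 1 ∧ (-1 : α) ^ (2 * k + 1) = -1 := fun k ↦ by
    simp [pow_succ, pow_mul]
  rw [hf.tsum_sub (ho.mul_left 2), ho.tsum_mul_left,
    ← tsum_even_add_odd (f := fun k ↦ (-1) ^ k * f k), ← tsum_even_add_odd he ho]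
  · simp only [hsign, one_mul, neg_one_mul, tsum_neg]
    rw [two_mul]
    abel
  · simpa only [hsign, one_mul] using he
  · simpa only [hsign, neg_one_mul] using ho.neg

theorem div_one_add_eq_div_one_sub_sub {K : Type*} [Field K] {m : K} (h₁ : 1 - m ≠ 0)
    (h₂ : 1 + m ≠ 0) : m / (1 + m) = m / (1 - m) - 2 * (m ^ 2 / (1 - m ^ 2)) := by
  rw [show 1 - m ^ 2 = (1 - m) * (1 + m) by ring]
  field_simp
  ring

theorem div_one_add_lt_div_one_add {a b : ℝ} (ha : 0 ≤ a) (hab : a < b) :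
    a / (1 + a) < b / (1 + b) := by
  rw [div_lt_div_iff₀ (by positivity) (by linarith)]
  linarith

theorem summable_pow_succ_div_one_sub_pow_succ {z : ℝ} (hz₀ : 0 ≤ z) (hz₁ : z < 1) :
    Summable fun k : ℕ ↦ z ^ (k + 1) / (1 - z ^ (k + 1)) := by
  refine .of_nonneg_of_le (fun k ↦ ?_) (fun k ↦ ?_)
    ((summable_nat_add_iff 1).2 ((summable_geometric_of_lt_one hz₀ hz₁).div_const (1 - z)))
  · exact div_nonneg (pow_nonneg hz₀ _) (sub_nonneg.2 (pow_le_one₀ hz₀ hz₁.le))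
  · have hle : z ^ (k + 1) ≤ z := pow_le_of_le_one hz₀ hz₁.le k.succ_ne_zero
    exact div_le_div_of_nonneg_left (pow_nonneg hz₀ _) (by linarith) (by linarith)

noncomputable def tauFn (z : ℝ) : ℝ :=
  ∑' k : ℕ, z ^ (k + 1) / (1 + z ^ (k + 1))

section tauFn

variable {z : ℝ}

theorem pow_succ_div_one_add_pow_succ_le (hz₀ : 0 ≤ z) (k : ℕ) :
    z ^ (k + 1) / (1 + z ^ (k + 1)) ≤ z ^ (k + 1) :=
  div_le_self (pow_nonneg hz₀ _) (le_add_of_nonneg_right (pow_nonneg hz₀ _))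

theorem summable_pow_succ_div_one_add_pow_succ (hz₀ : 0 ≤ z) (hz₁ : z < 1) :
    Summable fun k : ℕ ↦ z ^ (k + 1) / (1 + z ^ (k + 1)) :=
  .of_nonneg_of_le (fun k ↦ by positivity) (pow_succ_div_one_add_pow_succ_le hz₀)
    ((summable_nat_add_iff 1).2 (summable_geometric_of_lt_one hz₀ hz₁))

theorem sigmaFn_eqOn_tauFn : Set.EqOn sigmaFn tauFn (Set.Ico 0 1) := by
  intro z ⟨hz₀, hz₁⟩
  have hterm (k : ℕ) : z ^ (k + 1) / (1 - z ^ (k + 1)) - 2 *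
      (z ^ (2 * k + 1 + 1) / (1 - z ^ (2 * k + 1 + 1))) = z ^ (k + 1) / (1 + z ^ (k + 1)) := by
    rw [show 2 * k + 1 + 1 = (k + 1) * 2 by ring, pow_mul]
    exact (div_one_add_eq_div_one_sub_sub
      (sub_ne_zero.2 (pow_lt_one₀ hz₀ hz₁ k.succ_ne_zero).ne') (by positivity)).symm
  simp only [sigmaFn, tauFn, mul_div_assoc]
  rw [tsum_neg_one_pow_mul_eq_tsum_sub (summable_pow_succ_div_one_sub_pow_succ hz₀ hz₁)]
  exact tsum_congr hterm

theorem tauFn_strictMonoOn : StrictMonoOn tauFn (Set.Ico 0 1) := by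
  intro x ⟨hx₀, hx₁⟩ y ⟨hy₀, hy₁⟩ hxy
  have hlt (k : ℕ) : x ^ (k + 1) / (1 + x ^ (k + 1)) < y ^ (k + 1) / (1 + y ^ (k + 1)) :=
    div_one_add_lt_div_one_add (pow_nonneg hx₀ _) (pow_lt_pow_left₀ hxy hx₀ k.succ_ne_zero)
  exact (summable_pow_succ_div_one_add_pow_succ hx₀ hx₁).tsum_lt_tsum (fun k ↦ (hlt k).le)
    (hlt 0) (summable_pow_succ_div_one_add_pow_succ hy₀ hy₁)

theorem continuousOn_tauFn {b : ℝ} (hb₀ : 0 ≤ b) (hb₁ : b < 1) :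
    ContinuousOn tauFn (Set.Icc 0 b) := by
  refine continuousOn_tsum (fun k ↦ ?_) ((summable_nat_add_iff 1).2
    (summable_geometric_of_lt_one hb₀ hb₁)) fun k x ⟨hx₀, hxb⟩ ↦ ?_
  · exact ContinuousOn.div (by fun_prop) (by fun_prop) fun x ⟨hx₀, _⟩ ↦ by positivity
  · rw [Real.norm_of_nonneg (by positivity)]
    exact (pow_succ_div_one_add_pow_succ_le hx₀ k).trans (pow_le_pow_left₀ hx₀ hxb _)

theorem sum_range_le_tauFn (hz₀ : 0 ≤ z) (hz₁ : z < 1) (N : ℕ) :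
    ∑ k ∈ Finset.range N, z ^ (k + 1) / (1 + z ^ (k + 1)) ≤ tauFn z :=
  (summable_pow_succ_div_one_add_pow_succ hz₀ hz₁).sum_le_tsum _ fun k _ ↦ by positivity

theorem tauFn_le_sum_range_add (hz₀ : 0 ≤ z) (hz₁ : z < 1) (N : ℕ) :
    tauFn z ≤
      ∑ k ∈ Finset.range N, z ^ (k + 1) / (1 + z ^ (k + 1)) + z ^ (N + 1) / (1 - z) := by
  have hs := summable_pow_succ_div_one_add_pow_succ hz₀ hz₁
  have hgeom := summable_geometric_of_lt_one hz₀ hz₁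
  rw [tauFn, ← hs.sum_add_tsum_nat_add N]
  gcongr
  calc ∑' k, z ^ (k + N + 1) / (1 + z ^ (k + N + 1))
      ≤ ∑' k, z ^ (N + 1) * z ^ k :=
        ((summable_nat_add_iff N).2 hs).tsum_le_tsum
          (fun k ↦ (pow_succ_div_one_add_pow_succ_le hz₀ _).trans_eq (by ring))
          (hgeom.mul_left _)
    _ = z ^ (N + 1) / (1 - z) := by
        rw [tsum_mul_left, tsum_geometric_of_lt_one hz₀ hz₁, div_eq_mul_inv]

end tauFn

/-- The equation `σ(z) = 1` has exactly one real solution `ρ` in `(0,1)`,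
and `0.571349 < ρ < 0.571350`. -/
theorem sigma_eq_one_unique_root :
    ∃ ρ : ℝ, ρ ∈ Set.Ioo (0 : ℝ) 1 ∧ sigmaFn ρ = 1 ∧
      0.571349 < ρ ∧ ρ < 0.571350 ∧
      ∀ x ∈ Set.Ioo (0 : ℝ) 1, sigmaFn x = 1 → x = ρ := by
  have hcont : ContinuousOn tauFn (Set.Icc 0.571349 0.571350) :=
    (continuousOn_tauFn (by norm_num) (by norm_num)).mono (Set.Icc_subset_Icc_left (by norm_num))
  have hlow : tauFn 0.571349 < 1 := (tauFn_le_sum_range_add (by norm_num) (by norm_num) 30).trans_lt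
    (by norm_num [Finset.sum_range_succ])
  have hhigh : 1 < tauFn 0.571350 := lt_of_lt_of_le (by norm_num [Finset.sum_range_succ])
    (sum_range_le_tauFn (by norm_num) (by norm_num) 30)
  obtain ⟨ρ, ⟨hρa, hρb⟩, hτρ⟩ := intermediate_value_Ioo (by norm_num) hcont ⟨hlow, hhigh⟩
  have hρ : ρ ∈ Set.Ioo (0 : ℝ) 1 := ⟨by linarith, by linarith⟩
  have hσρ : sigmaFn ρ = 1 := (sigmaFn_eqOn_tauFn (Set.Ioo_subset_Ico_self hρ)).trans hτρ
  refine ⟨ρ, hρ, hσρ, hρa, hρb, fun x hx hσx ↦ ?_⟩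
  exact (tauFn_strictMonoOn.congr sigmaFn_eqOn_tauFn.symm).injOn
    (Set.Ioo_subset_Ico_self hx) (Set.Ioo_subset_Ico_self hρ) (hσx.trans hσρ.symm)
end

section
/- For j ≥ 6 let ρ_j be the unique real solution in (0,1) of σ_j(z) = 1, where σ_j(z) = σ(z) - z^j/(1-z^j) and σ(z) = ∑_{ℓ≥1} (-1)^{ℓ-1} z^ℓ/(1-z^ℓ), and let ρ be the unique real solution of σ(z) = 1 in (0,1). Then the sequence (ρ_j)_{j≥6} is strictly decreasing and converges to ρ as j → ∞. -/
open Filter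

/-- `σ_j(z) = σ(z) - z^j/(1-z^j)`. -/
noncomputable def sigmaJFn (j : ℕ) (z : ℝ) : ℝ :=
  sigmaFn z - z ^ j / (1 - z ^ j)

/-!
On `(0,1)` the subtracted term `z^j/(1-z^j)` is positive and strictly decreasing in `j`, so
`σ_j < σ_k < σ` there for `j < k`. All these functions are continuous and below `1` near `0`,
so the intermediate value theorem puts a root of `σ_k` (and one of `σ`) strictly left of `ρ_j`,
and uniqueness gives `ρ < ρ_k < ρ_j`. The decreasing sequence therefore converges to some
`L ∈ [ρ, ρ_6]`, and `σ(ρ_j) = 1 + ρ_j^j/(1-ρ_j^j) → 1` because `ρ_j → L < 1` forces `ρ_j^j → 0`;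
by continuity `σ(L) = 1`, hence `L = ρ`.
-/

open Set Topology

lemma norm_sigma_term_le {z b : ℝ} (hzb : |z| ≤ b) (hb : b < 1) (ℓ : ℕ) :
    ‖(-1 : ℝ) ^ ℓ * z ^ (ℓ + 1) / (1 - z ^ (ℓ + 1))‖ ≤ b ^ ℓ * (b / (1 - b)) := by
  have hz1 : |z| ≤ 1 := hzb.trans hb.le
  have hpow : |z| ^ (ℓ + 1) ≤ b := (pow_le_of_le_one (abs_nonneg z) hz1 ℓ.succ_ne_zero).trans hzb
  have hden : 1 - b ≤ |1 - z ^ (ℓ + 1)| := by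
    have := abs_sub_abs_le_abs_sub 1 (z ^ (ℓ + 1))
    rw [abs_one, abs_pow] at this
    linarith
  rw [norm_div, norm_mul, norm_pow, norm_neg, norm_one, one_pow, one_mul, Real.norm_eq_abs,
    Real.norm_eq_abs, abs_pow, ← mul_div_assoc, ← pow_succ]
  exact div_le_div₀ (pow_nonneg ((abs_nonneg z).trans hzb) _)
    (pow_le_pow_left₀ (abs_nonneg z) hzb _) (by linarith) hden

lemma one_sub_pow_ne_zero {z : ℝ} (hz : |z| < 1) {n : ℕ} (hn : n ≠ 0) : 1 - z ^ n ≠ 0 := by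
  refine sub_ne_zero.mpr (ne_of_gt (lt_of_abs_lt ?_))
  rw [abs_pow]
  exact pow_lt_one₀ (abs_nonneg z) hz hn

lemma continuousOn_sigmaFn : ContinuousOn sigmaFn (Ioo (-1) 1) := by
  refine continuousOn_of_forall_continuousAt fun x hx => ?_
  obtain ⟨b, hxb, hb⟩ := exists_between (abs_lt.mpr hx)
  have hball : ContinuousOn sigmaFn (Metric.closedBall 0 b) := by
    refine continuousOn_tsum (u := fun ℓ => b ^ ℓ * (b / (1 - b))) (fun ℓ => ?_)
      ((summable_geometric_of_lt_one ((abs_nonneg x).trans hxb.le) hb).mul_right _)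
      fun ℓ z hz => ?_
    · refine ContinuousOn.div (by fun_prop) (by fun_prop) fun z hz => ?_
      rw [mem_closedBall_zero_iff, Real.norm_eq_abs] at hz
      exact one_sub_pow_ne_zero (hz.trans_lt hb) ℓ.succ_ne_zero
    · rw [mem_closedBall_zero_iff, Real.norm_eq_abs] at hz
      exact norm_sigma_term_le hz hb ℓ
  exact hball.continuousAt (Metric.closedBall_mem_nhds_of_mem (by simpa using hxb))

lemma abs_sigmaFn_le {z : ℝ} (hz : |z| < 1) : |sigmaFn z| ≤ |z| / (1 - |z|) ^ 2 := by
  have hbound := norm_sigma_term_le le_rfl hz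
  have hgeom : Summable fun ℓ : ℕ => |z| ^ ℓ * (|z| / (1 - |z|)) :=
    (summable_geometric_of_lt_one (abs_nonneg z) hz).mul_right _
  calc |sigmaFn z| ≤ ∑' ℓ : ℕ, |z| ^ ℓ * (|z| / (1 - |z|)) :=
        tsum_of_norm_bounded hgeom.hasSum hbound
    _ = |z| / (1 - |z|) ^ 2 := by
        rw [tsum_mul_right, tsum_geometric_of_lt_one (abs_nonneg z) hz]
        field_simp

lemma sigmaFn_lt_one {z : ℝ} (hz : |z| ≤ 1 / 4) : sigmaFn z < 1 := by
  have hz1 : |z| < 1 := by linarith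
  refine (le_abs_self _).trans_lt ((abs_sigmaFn_le hz1).trans_lt ?_)
  rw [div_lt_one (by nlinarith)]
  nlinarith

lemma continuousOn_sigmaJFn {j : ℕ} (hj : j ≠ 0) : ContinuousOn (sigmaJFn j) (Ioo (-1) 1) :=
  continuousOn_sigmaFn.sub (ContinuousOn.div (by fun_prop) (by fun_prop)
    fun z hz => one_sub_pow_ne_zero (abs_lt.mpr hz) hj)

lemma sigmaJFn_lt_sigmaFn {j : ℕ} (hj : j ≠ 0) {z : ℝ} (hz : z ∈ Ioo 0 1) :
    sigmaJFn j z < sigmaFn z := by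
  have hzj : z ^ j < 1 := pow_lt_one₀ hz.1.le hz.2 hj
  have : 0 < z ^ j / (1 - z ^ j) := div_pos (pow_pos hz.1 j) (by linarith)
  rw [sigmaJFn]
  linarith

lemma sigmaJFn_lt_sigmaJFn {j k : ℕ} (hj : j ≠ 0) (hjk : j < k) {z : ℝ} (hz : z ∈ Ioo 0 1) :
    sigmaJFn j z < sigmaJFn k z := by
  have hzj : z ^ j < 1 := pow_lt_one₀ hz.1.le hz.2 hj
  have hzkj : z ^ k < z ^ j := pow_lt_pow_right_of_lt_one₀ hz.1 hz.2 hjk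
  have : z ^ k / (1 - z ^ k) < z ^ j / (1 - z ^ j) := by
    rw [div_lt_div_iff₀ (by linarith) (by linarith)]
    linarith
  rw [sigmaJFn, sigmaJFn]
  linarith

lemma sigmaJFn_lt_one {j : ℕ} (hj : j ≠ 0) {z : ℝ} (hz : z ∈ Ioc 0 (1 / 4)) :
    sigmaJFn j z < 1 :=
  (sigmaJFn_lt_sigmaFn hj ⟨hz.1, by linarith [hz.2]⟩).trans
    (sigmaFn_lt_one ((abs_of_pos hz.1).trans_le hz.2))

lemma exists_eq_one_of_one_lt {f : ℝ → ℝ} (hf : ContinuousOn f (Ioo 0 1))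
    (hsmall : ∀ z ∈ Ioc 0 (1 / 4), f z < 1) {c : ℝ} (hc : c ∈ Ioo 0 1) (hfc : 1 < f c) :
    ∃ x ∈ Ioo 0 c, f x = 1 := by
  set a := min (1 / 4) (c / 2)
  have ha0 : 0 < a := lt_min (by norm_num) (half_pos hc.1)
  have hac : a < c := (min_le_right _ _).trans_lt (half_lt_self hc.1)
  obtain ⟨x, hx, hfx⟩ := intermediate_value_Ioo hac.le
    (hf.mono fun y hy => ⟨ha0.trans_le hy.1, hy.2.trans_lt hc.2⟩)
    ⟨hsmall a ⟨ha0, min_le_left _ _⟩, hfc⟩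
  exact ⟨x, ⟨ha0.trans hx.1, hx.2⟩, hfx⟩

lemma unique_root_sigmaFn_mem_Ioo {y : ℝ} (hy : ∀ x ∈ Ioo 0 1, sigmaFn x = 1 → x = y)
    {j : ℕ} (hj : j ≠ 0) {c : ℝ} (hc : c ∈ Ioo 0 1) (hjc : sigmaJFn j c = 1) : y ∈ Ioo 0 c := by
  obtain ⟨x, hx, hfx⟩ := exists_eq_one_of_one_lt (continuousOn_sigmaFn.mono
    (Ioo_subset_Ioo_left (by norm_num)))
    (fun z hz => sigmaFn_lt_one ((abs_of_pos hz.1).trans_le hz.2)) hc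
    (hjc ▸ sigmaJFn_lt_sigmaFn hj hc)
  exact hy x ⟨hx.1, hx.2.trans hc.2⟩ hfx ▸ hx

lemma unique_root_sigmaJFn_lt {j k : ℕ} (hj : j ≠ 0) (hjk : j < k) {y : ℝ}
    (hy : ∀ x ∈ Ioo 0 1, sigmaJFn k x = 1 → x = y) {c : ℝ} (hc : c ∈ Ioo 0 1)
    (hjc : sigmaJFn j c = 1) : y < c := by
  have hk : k ≠ 0 := by omega
  obtain ⟨x, hx, hfx⟩ := exists_eq_one_of_one_lt ((continuousOn_sigmaJFn hk).mono
    (Ioo_subset_Ioo_left (by norm_num))) (fun z hz => sigmaJFn_lt_one hk hz) hc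
    (hjc ▸ sigmaJFn_lt_sigmaJFn hj hjk hc)
  exact hy x ⟨hx.1, hx.2.trans hc.2⟩ hfx ▸ hx.2

lemma tendsto_pow_self_zero {x : ℕ → ℝ} {L : ℝ} (hL : |L| < 1) (hx : Tendsto x atTop (𝓝 L)) :
    Tendsto (fun n => x n ^ n) atTop (𝓝 0) := by
  obtain ⟨b, hLb, hb⟩ := exists_between hL
  have hle : ∀ᶠ n in atTop, ‖x n ^ n‖ ≤ b ^ n := by
    filter_upwards [(continuous_abs.tendsto L).comp hx |>.eventually (gt_mem_nhds hLb)] with n hn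
    rw [norm_pow, Real.norm_eq_abs]
    exact pow_le_pow_left₀ (abs_nonneg _) hn.le n
  exact squeeze_zero_norm' hle
    (tendsto_pow_atTop_nhds_zero_of_lt_one ((abs_nonneg L).trans hLb.le) hb)

lemma sigmaFn_eq_one_of_tendsto {x : ℕ → ℝ} {L : ℝ} (hL : |L| < 1)
    (hx : Tendsto x atTop (𝓝 L)) (hroot : ∀ᶠ n in atTop, sigmaJFn n (x n) = 1) :
    sigmaFn L = 1 := by
  have hpow := tendsto_pow_self_zero hL hx
  have htail : Tendsto (fun n => 1 + x n ^ n / (1 - x n ^ n)) atTop (𝓝 1) := by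
    simpa using tendsto_const_nhds.add (hpow.div (tendsto_const_nhds.sub hpow) (by norm_num))
  have hσ : Tendsto (fun n => sigmaFn (x n)) atTop (𝓝 1) := by
    refine htail.congr' ?_
    filter_upwards [hroot] with n hn
    rw [sigmaJFn] at hn
    linarith
  have hcont : ContinuousAt sigmaFn L :=
    continuousOn_sigmaFn.continuousAt (Ioo_mem_nhds (neg_lt_of_abs_lt hL) (lt_of_abs_lt hL))
  exact tendsto_nhds_unique (hcont.tendsto.comp hx) hσ

theorem rho_j_strict_anti_tendsto_general (ρ : ℝ)
    (hρu : ∀ x ∈ Set.Ioo (0 : ℝ) 1, sigmaFn x = 1 → x = ρ)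
    (r : ℕ → ℝ)
    (hr : ∀ j, 6 ≤ j → r j ∈ Set.Ioo (0 : ℝ) 1 ∧ sigmaJFn j (r j) = 1)
    (hru : ∀ j, 6 ≤ j → ∀ x ∈ Set.Ioo (0 : ℝ) 1, sigmaJFn j x = 1 → x = r j) :
    (∀ j k, 6 ≤ j → j < k → r k < r j) ∧ Tendsto r atTop (nhds ρ) := by
  have hanti : ∀ j k, 6 ≤ j → j < k → r k < r j := fun j k hj hjk =>
    unique_root_sigmaJFn_lt (by omega) hjk (hru k (by omega)) (hr j hj).1 (hr j hj).2
  have hρr : ∀ j, 6 ≤ j → ρ ∈ Ioo 0 (r j) := fun j hj =>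
    unique_root_sigmaFn_mem_Ioo hρu (by omega) (hr j hj).1 (hr j hj).2
  refine ⟨hanti, ?_⟩
  obtain ⟨L, hL⟩ : ∃ L, Tendsto r atTop (𝓝 L) := by
    have hshift : Antitone fun n => r (n + 6) :=
      antitone_nat_of_succ_le fun n => (hanti _ _ (by omega) (by omega)).le
    exact ⟨_, (tendsto_add_atTop_iff_nat 6).mp (tendsto_atTop_ciInf hshift
      ⟨ρ, forall_mem_range.mpr fun n => (hρr (n + 6) (by omega)).2.le⟩)⟩
  have hρL : ρ ≤ L := ge_of_tendsto hL (eventually_atTop.mpr ⟨6, fun j hj => (hρr j hj).2.le⟩)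
  have hL6 : L ≤ r 6 :=
    le_of_tendsto hL (eventually_atTop.mpr ⟨7, fun j hj => (hanti 6 j le_rfl hj).le⟩)
  have hLmem : L ∈ Ioo 0 1 := ⟨(hρr 6 le_rfl).1.trans_le hρL, hL6.trans_lt (hr 6 le_rfl).1.2⟩
  have hσL : sigmaFn L = 1 :=
    sigmaFn_eq_one_of_tendsto (abs_lt.mpr ⟨by linarith [hLmem.1], hLmem.2⟩) hL
      (eventually_atTop.mpr ⟨6, fun j hj => (hr j hj).2⟩)
  rwa [hρu L hLmem hσL] at hL

/-- If `ρ` is the unique solution of `σ(z) = 1` in `(0,1)` and, for each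
`j ≥ 6`, `ρ_j = r j` is the unique solution of `σ_j(z) = 1` in `(0,1)`, then
the sequence `(ρ_j)_{j ≥ 6}` is strictly decreasing and converges to `ρ`. -/
theorem rho_j_strict_anti_tendsto (ρ : ℝ)
    (hρ : ρ ∈ Set.Ioo (0 : ℝ) 1 ∧ sigmaFn ρ = 1)
    (hρu : ∀ x ∈ Set.Ioo (0 : ℝ) 1, sigmaFn x = 1 → x = ρ)
    (r : ℕ → ℝ)
    (hr : ∀ j, 6 ≤ j → r j ∈ Set.Ioo (0 : ℝ) 1 ∧ sigmaJFn j (r j) = 1)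
    (hru : ∀ j, 6 ≤ j → ∀ x ∈ Set.Ioo (0 : ℝ) 1, sigmaJFn j x = 1 → x = r j) :
    (∀ j k, 6 ≤ j → j < k → r k < r j) ∧ Tendsto r atTop (nhds ρ) :=
  rho_j_strict_anti_tendsto_general ρ hρu r hr hru
end

section
/- For j ≥ 6 let ρ_j be the unique real solution in (0,1) of σ_j(z) = 1, where σ_j(z) = σ(z) - z^j/(1-z^j), and let ρ be the unique real solution of σ(z) = 1 in (0,1). Then, as j → ∞, -1/σ_j'(ρ_j) = -1/σ'(ρ) + O(j ρ^j); that is, there is a constant C such that |1/σ_j'(ρ_j) - 1/σ'(ρ)| ≤ C j ρ^j for all j ≥ 6. -/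
/-!
Expanding every term of `σ` as a geometric series and summing in the other order gives
`σ(z) = ∑_{n≥1} z^n/(1+z^n)`, a sum of increasing functions whose first term alone gives
`σ(y) - σ(x) ≥ (y - x)/4`; in particular `σ'(ρ) ≥ 1/4`. Since `σ_j(ρ_j) = 1` says
`σ(ρ_j) - σ(ρ) = ρ_j^j/(1 - ρ_j^j)`, this yields `ρ ≤ ρ_j ≤ 3/4` and `ρ_j - ρ ≤ 8 ρ_j^j`, so
`(ρ_j/ρ)^j ≤ exp(8 j (3/4)^j / ρ)` is bounded and `ρ_j^j = O(ρ^j)`, `ρ_j - ρ = O(ρ^j)`.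
As the restriction of a Lambert series holomorphic on the unit disc, `σ` is real analytic on
`(-1, 1)`, so `σ'(ρ_j) - σ'(ρ) = O(ρ_j - ρ)`, while the derivative `j z^(j-1)/(1-z^j)^2` of the
removed term is `O(j ρ_j^j)` at `ρ_j`. Hence `σ_j'(ρ_j) - σ'(ρ) = O(j ρ^j)`, and inverting
(`σ'(ρ) ≠ 0`) gives the claim.
-/

open Set Filter Asymptotics Topology

lemma tsum_pow_succ_of_abs_lt_one {w : ℝ} (hw : |w| < 1) : ∑' k : ℕ, w ^ (k + 1) = w / (1 - w) := by
  simp_rw [pow_succ']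
  rw [tsum_mul_left, tsum_geometric_of_abs_lt_one hw, div_eq_mul_inv]

lemma tsum_neg_one_pow_mul_pow_succ_of_abs_lt_one {w : ℝ} (hw : |w| < 1) :
    ∑' k : ℕ, (-1 : ℝ) ^ k * w ^ (k + 1) = w / (1 + w) := by
  have h : ∀ k : ℕ, (-1 : ℝ) ^ k * w ^ (k + 1) = w * (-w) ^ k := fun k => by
    rw [neg_pow]; ring
  rw [tsum_congr h, tsum_mul_left, tsum_geometric_of_abs_lt_one (by rwa [abs_neg]),
    sub_neg_eq_add, div_eq_mul_inv]

theorem sigmaFn_eq_tsum {z : ℝ} (hz : |z| < 1) :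
    sigmaFn z = ∑' n : ℕ, z ^ (n + 1) / (1 + z ^ (n + 1)) := by
  have hpow : ∀ n : ℕ, |z ^ (n + 1)| < 1 := fun n => by
    rw [abs_pow]; exact pow_lt_one₀ (abs_nonneg z) hz n.succ_ne_zero
  set F : ℕ → ℕ → ℝ := fun ℓ k => (-1 : ℝ) ^ ℓ * z ^ ((ℓ + 1) * (k + 1))
  have hF : Summable (Function.uncurry F) := by
    have hg := summable_geometric_of_lt_one (abs_nonneg z) hz
    refine Summable.of_norm_bounded (hg.mul_of_nonneg hg (fun _ => by positivity)
      (fun _ => by positivity)) fun p => ?_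
    simp only [Function.uncurry, F, norm_mul, norm_pow, norm_neg, norm_one, one_pow, one_mul,
      Real.norm_eq_abs, ← pow_add]
    exact pow_le_pow_of_le_one (abs_nonneg z) hz.le (by nlinarith)
  calc sigmaFn z = ∑' ℓ, ∑' k, F ℓ k := by
        refine tsum_congr fun ℓ => ?_
        simp only [F, pow_mul, tsum_mul_left, tsum_pow_succ_of_abs_lt_one (hpow ℓ), mul_div_assoc]
    _ = ∑' k, ∑' ℓ, F ℓ k := hF.tsum_comm.symm
    _ = _ := by
        refine tsum_congr fun k => ?_
        rw [← tsum_neg_one_pow_mul_pow_succ_of_abs_lt_one (hpow k)]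
        exact tsum_congr fun ℓ => by rw [← pow_mul, Nat.mul_comm]

lemma summable_pow_succ_div_one_add_pow_succ_s8 {z : ℝ} (h0 : 0 ≤ z) (h1 : z < 1) :
    Summable fun n : ℕ => z ^ (n + 1) / (1 + z ^ (n + 1)) :=
  Summable.of_nonneg_of_le (fun n => by positivity)
    (fun n => div_le_self (by positivity) (by simp [pow_nonneg h0]))
    ((summable_geometric_of_lt_one h0 h1).mul_left z |>.congr fun n => (pow_succ' z n).symm)

lemma div_one_add_sub_div_one_add {a b : ℝ} (ha : 0 ≤ a) (hb : 0 ≤ b) :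
    b / (1 + b) - a / (1 + a) = (b - a) / ((1 + a) * (1 + b)) := by
  field_simp
  ring

theorem sub_div_four_le_sigmaFn_sub {x y : ℝ} (hx : 0 ≤ x) (hxy : x ≤ y) (hy : y < 1) :
    (y - x) / 4 ≤ sigmaFn y - sigmaFn x := by
  have hx1 : x < 1 := hxy.trans_lt hy
  rw [sigmaFn_eq_tsum (abs_lt.2 ⟨by linarith, hy⟩), sigmaFn_eq_tsum (abs_lt.2 ⟨by linarith, hx1⟩),
    ← (summable_pow_succ_div_one_add_pow_succ_s8 (hx.trans hxy) hy).tsum_sub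
      (summable_pow_succ_div_one_add_pow_succ_s8 hx hx1)]
  have hterm : ∀ n : ℕ, 0 ≤ y ^ (n + 1) / (1 + y ^ (n + 1)) - x ^ (n + 1) / (1 + x ^ (n + 1)) :=
    fun n => by
      have hxn := pow_nonneg hx (n + 1)
      rw [div_one_add_sub_div_one_add hxn (pow_nonneg (hx.trans hxy) _)]
      exact div_nonneg (sub_nonneg.2 (pow_le_pow_left₀ hx hxy _))
        (by nlinarith [pow_le_pow_left₀ hx hxy (n + 1)])
  calc (y - x) / 4 ≤ (y - x) / ((1 + x) * (1 + y)) :=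
        div_le_div_of_nonneg_left (by linarith) (by nlinarith) (by nlinarith)
    _ = y ^ (0 + 1) / (1 + y ^ (0 + 1)) - x ^ (0 + 1) / (1 + x ^ (0 + 1)) := by
        rw [zero_add, pow_one, pow_one, div_one_add_sub_div_one_add hx (hx.trans hxy)]
    _ ≤ _ := ((summable_pow_succ_div_one_add_pow_succ_s8 (hx.trans hxy) hy).sub
        (summable_pow_succ_div_one_add_pow_succ_s8 hx hx1)).le_tsum 0 fun n _ => hterm n

theorem div_two_mul_one_sub_le_sigmaFn {z : ℝ} (h0 : 0 ≤ z) (h1 : z < 1) :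
    z / (2 * (1 - z)) ≤ sigmaFn z := by
  have hgeom : HasSum (fun n : ℕ => z ^ (n + 1) / 2) (z / (2 * (1 - z))) := by
    have h := (hasSum_geometric_of_lt_one h0 h1).mul_left (z / 2)
    rw [show z / 2 * (1 - z)⁻¹ = z / (2 * (1 - z)) by field_simp] at h
    simpa only [pow_succ', mul_div_right_comm, mul_comm] using h
  rw [sigmaFn_eq_tsum (abs_lt.2 ⟨by linarith, h1⟩)]
  refine hgeom.tsum_eq ▸ hgeom.summable.tsum_le_tsum (fun n => ?_)
    (summable_pow_succ_div_one_add_pow_succ_s8 h0 h1)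
  have : z ^ (n + 1) ≤ 1 := pow_le_one₀ h0 h1.le
  rw [div_le_div_iff₀ two_pos (by positivity)]
  nlinarith [pow_nonneg h0 (n + 1)]

theorem pow_div_one_sub_pow_le {x : ℝ} (h0 : 0 ≤ x) (h1 : x < 1) {j : ℕ} (hj : 0 < j) :
    x ^ j / (1 - x ^ j) ≤ x / (j * (1 - x)) := by
  have hxj : x ^ j < 1 := pow_lt_one₀ h0 h1 hj.ne'
  have hsum : (j : ℝ) * x ^ (j - 1) ≤ ∑ i ∈ Finset.range j, x ^ i := by
    calc (j : ℝ) * x ^ (j - 1) = ∑ i ∈ Finset.range j, x ^ (j - 1) := by simp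
      _ ≤ _ := Finset.sum_le_sum fun i hi =>
        pow_le_pow_of_le_one h0 h1.le (Nat.le_sub_one_of_lt (Finset.mem_range.1 hi))
  rw [div_le_div_iff₀ (by linarith) (mul_pos (Nat.cast_pos.2 hj) (by linarith)),
    ← mul_neg_geom_sum]
  calc x ^ j * (j * (1 - x)) = (1 - x) * ((j : ℝ) * (x * x ^ (j - 1))) := by
        rw [← pow_succ', Nat.sub_add_cancel hj]; ring
    _ ≤ x * ((1 - x) * ∑ i ∈ Finset.range j, x ^ i) := by
        nlinarith [mul_le_mul_of_nonneg_left hsum (mul_nonneg h0 (sub_nonneg.2 h1.le))]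

noncomputable def sigmaComplex (z : ℂ) : ℂ :=
  ∑' ℓ : ℕ, (-1 : ℂ) ^ ℓ * z ^ (ℓ + 1) / (1 - z ^ (ℓ + 1))

lemma norm_neg_one_pow_mul_pow_div_one_sub_pow_le {z : ℂ} {r : ℝ} (hz : ‖z‖ ≤ r) (hr : r < 1)
    (n : ℕ) :
    ‖(-1 : ℂ) ^ n * z ^ (n + 1) / (1 - z ^ (n + 1))‖ ≤ r ^ (n + 1) / (1 - r) := by
  have hr0 : 0 ≤ r := (norm_nonneg z).trans hz
  have hzn : ‖z ^ (n + 1)‖ ≤ r ^ (n + 1) := by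
    rw [norm_pow]; exact pow_le_pow_left₀ (norm_nonneg z) hz _
  have hrn : r ^ (n + 1) ≤ r := pow_le_of_le_one hr0 hr.le n.succ_ne_zero
  have hden : 1 - r ≤ ‖1 - z ^ (n + 1)‖ := by
    have := norm_sub_norm_le (1 : ℂ) (z ^ (n + 1))
    rw [norm_one] at this
    linarith
  rw [norm_div, norm_mul, norm_pow, norm_neg, norm_one, one_pow, one_mul]
  exact div_le_div₀ (by positivity) hzn (by linarith) hden

theorem differentiableOn_sigmaComplex : DifferentiableOn ℂ sigmaComplex (Metric.ball 0 1) := by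
  intro z hz
  rw [mem_ball_zero_iff] at hz
  obtain ⟨r, hzr, hr⟩ := exists_between hz
  suffices DifferentiableOn ℂ sigmaComplex (Metric.ball 0 r) from
    (this.differentiableAt (Metric.isOpen_ball.mem_nhds (mem_ball_zero_iff.2 hzr)))
      |>.differentiableWithinAt
  refine Complex.differentiableOn_tsum_of_summable_norm (u := fun n => r ^ (n + 1) / (1 - r)) ?_ ?_
    Metric.isOpen_ball fun n w hw =>
      norm_neg_one_pow_mul_pow_div_one_sub_pow_le (mem_ball_zero_iff.1 hw).le hr n
  · exact ((summable_geometric_of_lt_one ((norm_nonneg z).trans hzr.le) hr).mul_left r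
      |>.div_const (1 - r)).congr fun n => by ring
  · intro n w hw
    have hw1 : ‖w ^ (n + 1)‖ < 1 := by
      rw [norm_pow]
      exact pow_lt_one₀ (norm_nonneg w) ((mem_ball_zero_iff.1 hw).trans hr) n.succ_ne_zero
    have : 1 - w ^ (n + 1) ≠ 0 := fun h => by
      rw [sub_eq_zero] at h; rw [← h, norm_one] at hw1; exact lt_irrefl _ hw1
    fun_prop (disch := exact this)

-- Valid for every real `x`: `ofReal` commutes with `tsum`, summable or not.
theorem sigmaFn_eq_re_sigmaComplex (x : ℝ) : sigmaFn x = (sigmaComplex x).re := by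
  simp only [sigmaComplex, sigmaFn]
  rw [← Complex.ofReal_re (∑' ℓ : ℕ, _), Complex.ofReal_tsum]
  push_cast
  rfl

theorem analyticAt_sigmaFn {x : ℝ} (hx : |x| < 1) : AnalyticAt ℝ sigmaFn x := by
  rw [funext sigmaFn_eq_re_sigmaComplex]
  refine AnalyticAt.re_ofReal (differentiableOn_sigmaComplex.analyticAt ?_)
  exact Metric.isOpen_ball.mem_nhds (by simpa using hx)

theorem le_three_div_four_of_sigmaJFn_eq_one {j : ℕ} (hj : 6 ≤ j) {x : ℝ} (hx : x ∈ Ioo 0 1)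
    (h : sigmaJFn j x = 1) : x ≤ 3 / 4 := by
  obtain ⟨hx0, hx1⟩ := hx
  have hf : x ^ j / (1 - x ^ j) ≤ x / (6 * (1 - x)) :=
    (pow_div_one_sub_pow_le hx0.le hx1 (by omega)).trans
      (div_le_div_of_nonneg_left hx0.le (by nlinarith) (by gcongr; exact_mod_cast hj))
  have hσ := div_two_mul_one_sub_le_sigmaFn hx0.le hx1
  have hsplit : x / (2 * (1 - x)) - x / (6 * (1 - x)) = x / (3 * (1 - x)) := by
    field_simp; ring
  have : x / (3 * (1 - x)) ≤ 1 := by unfold sigmaJFn at h; linarith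
  rw [div_le_one (by linarith)] at this
  linarith

theorem pow_le_half_of_sigmaJFn_eq_one {j : ℕ} (hj : 6 ≤ j) {x : ℝ} (hx : x ∈ Ioo 0 1)
    (h : sigmaJFn j x = 1) : x ^ j ≤ 1 / 2 := calc
  x ^ j ≤ (3 / 4) ^ 6 :=
    (pow_le_pow_left₀ hx.1.le (le_three_div_four_of_sigmaJFn_eq_one hj hx h) j).trans
      (pow_le_pow_of_le_one (by norm_num) (by norm_num) hj)
  _ ≤ 1 / 2 := by norm_num

theorem le_and_sub_le_of_sigmaJFn_eq_one {j : ℕ} (hj : 6 ≤ j) {ρ x : ℝ} (hρ : ρ ∈ Ioo 0 1)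
    (hσρ : sigmaFn ρ = 1) (hx : x ∈ Ioo 0 1) (h : sigmaJFn j x = 1) :
    ρ ≤ x ∧ x - ρ ≤ 8 * x ^ j := by
  have hxj := pow_le_half_of_sigmaJFn_eq_one hj hx h
  have hσx : sigmaFn x - sigmaFn ρ = x ^ j / (1 - x ^ j) := by
    unfold sigmaJFn at h; linarith
  have hf0 : 0 ≤ x ^ j / (1 - x ^ j) := div_nonneg (pow_nonneg hx.1.le j) (by linarith)
  have hρx : ρ ≤ x := by
    by_contra! hxρ
    have := sub_div_four_le_sigmaFn_sub hx.1.le hxρ.le hρ.2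
    linarith
  refine ⟨hρx, ?_⟩
  have hf : x ^ j / (1 - x ^ j) ≤ 2 * x ^ j := by
    rw [div_le_iff₀ (by linarith)]; nlinarith [pow_nonneg hx.1.le j]
  linarith [sub_div_four_le_sigmaFn_sub hρ.1.le hρx hx.2]

theorem one_div_four_le_deriv_sigmaFn {x : ℝ} (hx : x ∈ Ioo 0 1) : 1 / 4 ≤ deriv sigmaFn x := by
  have hmono : MonotoneOn (fun z => sigmaFn z - z / 4) (Ioo 0 1) := fun a ha b hb hab => by
    have := sub_div_four_le_sigmaFn_sub ha.1.le hab hb.2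
    dsimp only; linarith
  have hderiv : HasDerivAt (fun z => sigmaFn z - z / 4) (deriv sigmaFn x - 1 / 4) x :=
    (analyticAt_sigmaFn (abs_lt.2 ⟨by linarith [hx.1], hx.2⟩)).differentiableAt.hasDerivAt.sub
      ((hasDerivAt_id x).div_const 4)
  have := hmono.derivWithin_nonneg (x := x)
  rw [derivWithin_of_isOpen isOpen_Ioo hx, hderiv.deriv] at this
  linarith

theorem hasDerivAt_sigmaJFn {j : ℕ} (hj : j ≠ 0) {x : ℝ} (hx : |x| < 1) :
    HasDerivAt (sigmaJFn j) (deriv sigmaFn x - j * x ^ (j - 1) / (1 - x ^ j) ^ 2) x := by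
  have hxj : 1 - x ^ j ≠ 0 := by
    rw [sub_ne_zero]; intro h
    have := pow_lt_one₀ (abs_nonneg x) hx hj
    rw [← abs_pow, ← h, abs_one] at this
    exact lt_irrefl _ this
  have hpow := hasDerivAt_pow j x
  refine (analyticAt_sigmaFn hx).differentiableAt.hasDerivAt.sub
    ((hpow.div (hpow.const_sub 1) hxj).congr_deriv ?_)
  field_simp
  ring

theorem pow_le_exp_mul_pow {ρ x a : ℝ} (hρ : 0 < ρ) (hx : 0 ≤ x) (h : x ≤ ρ + a) (n : ℕ) :
    x ^ n ≤ Real.exp (n * a / ρ) * ρ ^ n := by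
  have hx' : x ≤ ρ * Real.exp (a / ρ) := calc
    x ≤ ρ * (a / ρ + 1) := by rwa [mul_add, mul_div_cancel₀ _ hρ.ne', mul_one, add_comm]
    _ ≤ ρ * Real.exp (a / ρ) := by gcongr; exact Real.add_one_le_exp _
  calc x ^ n ≤ (ρ * Real.exp (a / ρ)) ^ n := pow_le_pow_left₀ hx hx' n
    _ = Real.exp (n * a / ρ) * ρ ^ n := by rw [mul_pow, ← Real.exp_nat_mul, mul_div_assoc, mul_comm]

theorem Asymptotics.IsBigO.inv_sub_inv {α 𝕜 F : Type*} [NormedField 𝕜] [NormedAddCommGroup F]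
    {l : Filter α} {f : α → 𝕜} {g : α → F} {a : 𝕜} (hf : (fun x => f x - a) =O[l] g)
    (hg : Tendsto g l (𝓝 0)) (ha : a ≠ 0) : (fun x => (f x)⁻¹ - a⁻¹) =O[l] g := by
  have hfa : Tendsto f l (𝓝 a) := by
    simpa using (hf.trans_tendsto hg).add_const a
  have hinv : (fun x => (f x * a)⁻¹) =O[l] (fun _ => (1 : 𝕜)) :=
    ((hfa.mul_const a).inv₀ (mul_ne_zero ha ha)).isBigO_one 𝕜
  refine (((isBigO_refl (fun x => f x - a) l).mul hinv).trans ?_).neg_left.congr' ?_ .rfl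
  · simpa only [mul_one] using hf
  · filter_upwards [hfa.eventually_ne ha] with x hx
    field_simp
    ring

section RootAsymptotics

variable {ρ : ℝ} {r : ℕ → ℝ}

theorem isBigO_rootJ_pow (hρ : ρ ∈ Ioo 0 1 ∧ sigmaFn ρ = 1)
    (hr : ∀ j, 6 ≤ j → r j ∈ Ioo 0 1 ∧ sigmaJFn j (r j) = 1) :
    (fun j => r j ^ j) =O[atTop] (ρ ^ ·) := by
  have hexp : Tendsto (fun j : ℕ => Real.exp (j * (8 * (3 / 4) ^ j) / ρ)) atTop (𝓝 1) := by
    have := (tendsto_self_mul_const_pow_of_lt_one (r := 3 / 4) (by norm_num) (by norm_num))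
      |>.const_mul 8 |>.div_const ρ |>.rexp
    simpa only [mul_zero, zero_div, Real.exp_zero, mul_left_comm (8 : ℝ), mul_assoc] using this
  refine IsBigO.of_bound 2 ?_
  filter_upwards [hexp.eventually (gt_mem_nhds one_lt_two), eventually_ge_atTop 6] with j hj2 hj6
  obtain ⟨hx, hσx⟩ := hr j hj6
  obtain ⟨-, hsub⟩ := le_and_sub_le_of_sigmaJFn_eq_one hj6 hρ.1 hρ.2 hx hσx
  have hxj : r j ^ j ≤ (3 / 4) ^ j :=
    pow_le_pow_left₀ hx.1.le (le_three_div_four_of_sigmaJFn_eq_one hj6 hx hσx) j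
  rw [Real.norm_of_nonneg (pow_nonneg hx.1.le j), Real.norm_of_nonneg (pow_nonneg hρ.1.1.le j)]
  calc r j ^ j ≤ Real.exp (j * (8 * (3 / 4) ^ j) / ρ) * ρ ^ j :=
        pow_le_exp_mul_pow hρ.1.1 hx.1.le (by linarith) j
    _ ≤ 2 * ρ ^ j := mul_le_mul_of_nonneg_right hj2.le (pow_nonneg hρ.1.1.le j)

theorem isBigO_rootJ_sub (hρ : ρ ∈ Ioo 0 1 ∧ sigmaFn ρ = 1)
    (hr : ∀ j, 6 ≤ j → r j ∈ Ioo 0 1 ∧ sigmaJFn j (r j) = 1) :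
    (fun j => r j - ρ) =O[atTop] (ρ ^ ·) := by
  refine IsBigO.trans (IsBigO.of_bound 8 ?_) (isBigO_rootJ_pow hρ hr)
  filter_upwards [eventually_ge_atTop 6] with j hj
  obtain ⟨hx, hσx⟩ := hr j hj
  obtain ⟨hρx, hsub⟩ := le_and_sub_le_of_sigmaJFn_eq_one hj hρ.1 hρ.2 hx hσx
  rwa [Real.norm_of_nonneg (sub_nonneg.2 hρx), Real.norm_of_nonneg (pow_nonneg hx.1.le j)]

theorem tendsto_rootJ (hρ : ρ ∈ Ioo 0 1 ∧ sigmaFn ρ = 1)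
    (hr : ∀ j, 6 ≤ j → r j ∈ Ioo 0 1 ∧ sigmaJFn j (r j) = 1) : Tendsto r atTop (𝓝 ρ) := by
  simpa using ((isBigO_rootJ_sub hρ hr).trans_tendsto
    (tendsto_pow_atTop_nhds_zero_of_lt_one hρ.1.1.le hρ.1.2)).add_const ρ

theorem isBigO_deriv_sigmaJFn_sub (hρ : ρ ∈ Ioo 0 1 ∧ sigmaFn ρ = 1)
    (hr : ∀ j, 6 ≤ j → r j ∈ Ioo 0 1 ∧ sigmaJFn j (r j) = 1) :
    (fun j => deriv (sigmaJFn j) (r j) - deriv sigmaFn ρ) =O[atTop] (fun j => j * ρ ^ j) := by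
  have habs : ∀ {x : ℝ}, x ∈ Ioo 0 1 → |x| < 1 := fun hx => abs_lt.2 ⟨by linarith [hx.1], hx.2⟩
  have hpow : (ρ ^ ·) =O[atTop] (fun j : ℕ => j * ρ ^ j) := by
    refine IsBigO.of_bound 1 ?_
    filter_upwards [eventually_ge_atTop 1] with j hj
    have : (1 : ℝ) ≤ j := by exact_mod_cast hj
    rw [norm_mul, one_mul]
    exact le_mul_of_one_le_left (norm_nonneg _) (by simpa using this)
  have hσ : (fun j => deriv sigmaFn (r j) - deriv sigmaFn ρ) =O[atTop] (fun j => j * ρ ^ j) :=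
    ((analyticAt_sigmaFn (habs hρ.1)).deriv.differentiableAt.hasDerivAt.isBigO_sub.comp_tendsto
      (tendsto_rootJ hρ hr)).trans ((isBigO_rootJ_sub hρ hr).trans hpow)
  have hf : (fun j => j * r j ^ (j - 1) / (1 - r j ^ j) ^ 2) =O[atTop] (fun j => j * ρ ^ j) := by
    refine IsBigO.trans (IsBigO.of_bound (4 / ρ) ?_)
      ((isBigO_refl (fun j : ℕ => (j : ℝ)) atTop).mul (isBigO_rootJ_pow hρ hr))
    filter_upwards [eventually_ge_atTop 6] with j hj
    obtain ⟨hx, hσx⟩ := hr j hj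
    have hρx := (le_and_sub_le_of_sigmaJFn_eq_one hj hρ.1 hρ.2 hx hσx).1
    have hxj := pow_le_half_of_sigmaJFn_eq_one hj hx hσx
    have hsucc : r j ^ (j - 1) * r j = r j ^ j := by rw [← pow_succ, Nat.sub_add_cancel (by omega)]
    have hjx : 0 ≤ (j : ℝ) * r j ^ (j - 1) := mul_nonneg (Nat.cast_nonneg j) (pow_nonneg hx.1.le _)
    rw [Real.norm_of_nonneg (div_nonneg hjx (sq_nonneg _)),
      Real.norm_of_nonneg (mul_nonneg (Nat.cast_nonneg j) (pow_nonneg hx.1.le j))]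
    calc (j : ℝ) * r j ^ (j - 1) / (1 - r j ^ j) ^ 2 ≤ j * r j ^ (j - 1) / (1 / 4) :=
          div_le_div_of_nonneg_left hjx (by norm_num) (by nlinarith)
      _ = 4 / ρ * (j * (r j ^ (j - 1) * ρ)) := by field_simp [hρ.1.1.ne']
      _ ≤ 4 / ρ * (j * r j ^ j) := by
          rw [← hsucc]
          gcongr
          · exact (div_pos four_pos hρ.1.1).le
          · exact pow_nonneg hx.1.le _
  refine (hσ.sub hf).congr' ?_ .rfl
  filter_upwards [eventually_ge_atTop 6] with j hj
  rw [(hasDerivAt_sigmaJFn (by omega) (habs (hr j hj).1)).deriv]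
  ring

end RootAsymptotics

theorem residue_asymptotics_general (ρ : ℝ)
    (hρ : ρ ∈ Set.Ioo (0 : ℝ) 1 ∧ sigmaFn ρ = 1)
    (r : ℕ → ℝ)
    (hr : ∀ j, 6 ≤ j → r j ∈ Set.Ioo (0 : ℝ) 1 ∧ sigmaJFn j (r j) = 1) :
    ∃ C : ℝ, ∀ j : ℕ, 6 ≤ j →
      |1 / deriv (sigmaJFn j) (r j) - 1 / deriv sigmaFn ρ| ≤ C * j * ρ ^ j := by
  have hD : deriv sigmaFn ρ ≠ 0 :=
    (lt_of_lt_of_le (by norm_num) (one_div_four_le_deriv_sigmaFn hρ.1)).ne'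
  obtain ⟨C, -, hC⟩ := bound_of_isBigO_nat_atTop <| (isBigO_deriv_sigmaJFn_sub hρ hr).inv_sub_inv
    (tendsto_self_mul_const_pow_of_lt_one hρ.1.1.le hρ.1.2) hD
  refine ⟨C, fun j hj => ?_⟩
  have hpos : 0 < (j : ℝ) * ρ ^ j :=
    mul_pos (by exact_mod_cast (by omega : 0 < j)) (pow_pos hρ.1.1 j)
  simpa only [one_div, Real.norm_eq_abs, abs_of_pos hpos, mul_assoc] using hC hpos.ne'

/-- With `ρ` the unique solution of `σ(z) = 1` in `(0,1)` and `ρ_j = r j` the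
unique solution of `σ_j(z) = 1` in `(0,1)` for `j ≥ 6`, one has
`-1/σ_j'(ρ_j) = -1/σ'(ρ) + O(j ρ^j)`: there is a constant `C` with
`|1/σ_j'(ρ_j) - 1/σ'(ρ)| ≤ C j ρ^j` for all `j ≥ 6`. -/
theorem residue_asymptotics (ρ : ℝ)
    (hρ : ρ ∈ Set.Ioo (0 : ℝ) 1 ∧ sigmaFn ρ = 1)
    (hρu : ∀ x ∈ Set.Ioo (0 : ℝ) 1, sigmaFn x = 1 → x = ρ)
    (r : ℕ → ℝ)
    (hr : ∀ j, 6 ≤ j → r j ∈ Set.Ioo (0 : ℝ) 1 ∧ sigmaJFn j (r j) = 1)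
    (hru : ∀ j, 6 ≤ j → ∀ x ∈ Set.Ioo (0 : ℝ) 1, sigmaJFn j x = 1 → x = r j) :
    ∃ C : ℝ, ∀ j : ℕ, 6 ≤ j →
      |1 / deriv (sigmaJFn j) (r j) - 1 / deriv sigmaFn ρ| ≤ C * j * ρ ^ j :=
  residue_asymptotics_general ρ hρ r hr
end

section
/- For each fixed j with 1 ≤ j ≤ 5, a_{n,j}/a_n → 0 as n → ∞, where a_n is the number of Carlitz compositions of n and a_{n,j} is the number of Carlitz compositions of n with no part equal to j. -/
open Filter

/-!
Inserting a part `j` at one of the first `T + 1` positions of a Carlitz composition of `n` that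
avoids `j` and has at least `T` parts gives a Carlitz composition of `n + j`, and the position is
recovered as that of the first `j`. So such compositions number at most
`a_{n+j} / (T + 1) ≤ 8 ^ j a_n / (T + 1)`, by the local bound `a_{m+1} ≤ 8 a_m`. Those with
fewer than `T` parts number at most `(n + 1) ^ T`, which is `o(a_n)` since `a_n` grows
exponentially (free concatenations of the blocks `1, 2, 3` and `1, 3, 2`). Let `T → ∞`.
-/

open Topology

theorem isCarlitz_iff {L : List ℕ} : IsCarlitz L ↔ L.IsChain (· ≠ ·) := Iff.rfl

theorem setOf_isComposition_finite (n : ℕ) : {L | IsComposition n L}.Finite :=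
  (Set.finite_range (Composition.blocks (n := n))).subset fun L hL =>
    ⟨⟨L, hL.1 _, hL.2⟩, rfl⟩

def carlitzSet (n : ℕ) : Set (List ℕ) := {L | IsComposition n L ∧ IsCarlitz L}

theorem carlitzCount_eq_ncard (n : ℕ) : carlitzCount n = (carlitzSet n).ncard := rfl

theorem carlitzSet_finite (n : ℕ) : (carlitzSet n).Finite :=
  (setOf_isComposition_finite n).subset fun _ hL => hL.1

theorem List.getD_zero_le_sum (L : List ℕ) (k : ℕ) : L.getD k 0 ≤ L.sum := by
  rcases lt_or_ge k L.length with hk | hk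
  · rw [List.getD_eq_getElem _ _ hk]
    exact List.le_sum_of_mem (List.getElem_mem hk)
  · rw [List.getD_eq_default _ _ hk]
    exact Nat.zero_le _

theorem List.eq_of_forall_getD_zero_eq {L L' : List ℕ} (hL : ∀ x ∈ L, 0 < x)
    (hL' : ∀ x ∈ L', 0 < x) (h : ∀ k, L.getD k 0 = L'.getD k 0) : L = L' := by
  refine List.ext_getElem? fun k => ?_
  have hk := h k
  simp only [List.getD_eq_getElem?_getD] at hk
  cases hx : L[k]? <;> cases hy : L'[k]? <;>
    simp only [hx, hy, Option.getD_some, Option.getD_none] at hk ⊢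
  · exact absurd hk.symm (hL' _ (List.mem_of_getElem? hy)).ne'
  · exact absurd hk (hL _ (List.mem_of_getElem? hx)).ne'
  · exact congrArg some hk

theorem ncard_setOf_isComposition_length_lt_le (n T : ℕ) :
    {L | IsComposition n L ∧ L.length < T}.ncard ≤ (n + 1) ^ T := by
  calc {L | IsComposition n L ∧ L.length < T}.ncard
      ≤ (Set.univ : Set (Fin T → Fin (n + 1))).ncard := by
        refine Set.ncard_le_ncard_of_injOn (fun L k => Fin.ofNat (n + 1) (L.getD k 0))
          (fun _ _ => Set.mem_univ _) (fun L hL L' hL' hLL' => ?_) Set.finite_univ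
        refine List.eq_of_forall_getD_zero_eq hL.1.1 hL'.1.1 fun k => ?_
        rcases lt_or_ge k T with hk | hk
        · have := congrArg Fin.val (congrFun hLL' ⟨k, hk⟩)
          simp only [Fin.val_ofNat] at this
          rwa [Nat.mod_eq_of_lt, Nat.mod_eq_of_lt] at this
          · exact Nat.lt_succ_of_le ((L'.getD_zero_le_sum k).trans_eq hL'.1.2)
          · exact Nat.lt_succ_of_le ((L.getD_zero_le_sum k).trans_eq hL.1.2)
        · rw [List.getD_eq_default _ _ (by have := hL.2; omega),
            List.getD_eq_default _ _ (by have := hL'.2; omega)]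
    _ = (n + 1) ^ T := by simp [Set.ncard_univ]

theorem isCarlitz_append_cons {A B : List ℕ} {a : ℕ} (h : IsCarlitz (A ++ B)) (hA : a ∉ A)
    (hB : a ∉ B) : IsCarlitz (A ++ a :: B) := by
  rw [isCarlitz_iff, List.isChain_append] at h ⊢
  refine ⟨h.1, List.isChain_cons.2 ⟨fun y hy => ?_, h.2.1⟩, fun x hx y hy => ?_⟩
  · rintro rfl
    exact hB (List.mem_of_mem_head? hy)
  · rw [List.head?_cons, Option.mem_some_iff] at hy
    rintro rfl
    exact hA (hy ▸ List.mem_of_mem_getLast? hx)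

theorem List.eq_of_take_append_cons_drop_eq {α : Type*} [DecidableEq α] {L L' : List α} {a : α}
    {i i' : ℕ} (hL : a ∉ L) (hL' : a ∉ L') (hi : i ≤ L.length) (hi' : i' ≤ L'.length)
    (h : L.take i ++ a :: L.drop i = L'.take i' ++ a :: L'.drop i') : i = i' ∧ L = L' := by
  have hlen : (L.take i).length = (L'.take i').length := by
    have := congrArg (List.idxOf a) h
    rwa [List.idxOf_append_of_notMem (fun h => hL (List.mem_of_mem_take h)),
      List.idxOf_append_of_notMem (fun h => hL' (List.mem_of_mem_take h)),
      List.idxOf_cons_self, List.idxOf_cons_self] at this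
  obtain ⟨htake, hdrop⟩ := List.append_inj h hlen
  rw [List.length_take, List.length_take] at hlen
  refine ⟨by omega, ?_⟩
  rw [← List.take_append_drop i L, ← List.take_append_drop i' L', htake,
    (List.cons_inj_right a).1 hdrop]

theorem mul_ncard_avoid_le_carlitzCount_add {n j : ℕ} (hj : 0 < j) (T : ℕ) :
    (T + 1) * {L | IsComposition n L ∧ IsCarlitz L ∧ j ∉ L ∧ T ≤ L.length}.ncard ≤
      carlitzCount (n + j) := by
  set S := {L | IsComposition n L ∧ IsCarlitz L ∧ j ∉ L ∧ T ≤ L.length}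
  calc (T + 1) * S.ncard = (Set.Iic T ×ˢ S).ncard := by simp [Set.ncard_prod]
    _ ≤ (carlitzSet (n + j)).ncard := by
        refine Set.ncard_le_ncard_of_injOn (fun p => p.2.take p.1 ++ j :: p.2.drop p.1)
          ?_ ?_ (carlitzSet_finite _)
        · rintro ⟨i, L⟩ ⟨-, ⟨hpos, hsum⟩, hcar, hjL, -⟩
          refine ⟨⟨fun x hx => ?_, ?_⟩, ?_⟩
          · simp only [List.mem_append, List.mem_cons] at hx
            rcases hx with hx | rfl | hx
            exacts [hpos x (List.mem_of_mem_take hx), hj, hpos x (List.mem_of_mem_drop hx)]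
          · rw [List.sum_append, List.sum_cons, ← hsum, ← List.sum_take_add_sum_drop L i]
            ring
          · exact isCarlitz_append_cons ((List.take_append_drop i L).symm ▸ hcar)
              (fun h => hjL (List.mem_of_mem_take h)) (fun h => hjL (List.mem_of_mem_drop h))
        · rintro ⟨i, L⟩ ⟨hi, -, -, hjL, hTL⟩ ⟨i', L'⟩ ⟨hi', -, -, hjL', hTL'⟩ h
          simp only [Set.mem_Iic] at hi hi' hTL hTL'
          simpa using List.eq_of_take_append_cons_drop_eq hjL hjL' (hi.trans hTL) (hi'.trans hTL') h
    _ = carlitzCount (n + j) := rfl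

theorem carlitzCountAvoid_mul_le {j : ℕ} (hj : 0 < j) (n T : ℕ) :
    (T + 1) * carlitzCountAvoid n j ≤ (T + 1) * (n + 1) ^ T + carlitzCount (n + j) := by
  set short := {L | IsComposition n L ∧ L.length < T}
  set long := {L | IsComposition n L ∧ IsCarlitz L ∧ j ∉ L ∧ T ≤ L.length}
  have hsplit : {L | IsComposition n L ∧ IsCarlitz L ∧ j ∉ L} ⊆ short ∪ long := by
    rintro L ⟨hL, hcar, hjL⟩
    rcases lt_or_ge L.length T with hT | hT
    exacts [Or.inl ⟨hL, hT⟩, Or.inr ⟨hL, hcar, hjL, hT⟩]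
  have hfin : (short ∪ long).Finite :=
    (setOf_isComposition_finite n).subset (Set.union_subset (fun _ h => h.1) fun _ h => h.1)
  calc (T + 1) * carlitzCountAvoid n j ≤ (T + 1) * (short.ncard + long.ncard) := by
        gcongr
        exact (Set.ncard_le_ncard hsplit hfin).trans (Set.ncard_union_le _ _)
    _ ≤ (T + 1) * (n + 1) ^ T + carlitzCount (n + j) := by
        rw [mul_add]
        gcongr
        · exact ncard_setOf_isComposition_length_lt_le n T
        · exact mul_ncard_avoid_le_carlitzCount_add hj T

theorem mem_carlitzSet_replace_prefix {P Q R : List ℕ} {k m : ℕ}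
    (hPR : P ++ R ∈ carlitzSet (m + 1)) (hP : P.sum = k + 1) (hQ : Q ∈ carlitzSet k)
    (hjoin : ∀ a ∈ Q.getLast?, ∀ b ∈ R.head?, a ≠ b) : Q ++ R ∈ carlitzSet m := by
  obtain ⟨⟨hpos, hsum⟩, hcar⟩ := hPR
  obtain ⟨⟨hQpos, hQsum⟩, hQcar⟩ := hQ
  refine ⟨⟨fun x hx => ?_, ?_⟩, ?_⟩
  · rcases List.mem_append.1 hx with hx | hx
    exacts [hQpos x hx, hpos x (List.mem_append_right P hx)]
  · rw [List.sum_append] at hsum ⊢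
    omega
  · rw [isCarlitz_iff, List.isChain_append]
    exact ⟨hQcar, (isCarlitz_iff.1 hcar).right_of_append, hjoin⟩

theorem cons_mem_carlitzSet_of_prefix {P R : List ℕ} {k m : ℕ}
    (hPR : P ++ R ∈ carlitzSet (m + 1)) (hP : P.sum = k + 1) (hk : 0 < k)
    (hR : R.head? ≠ some k) : k :: R ∈ carlitzSet m :=
  mem_carlitzSet_replace_prefix (Q := [k]) hPR hP
    ⟨⟨by simpa using hk, by simp⟩, List.isChain_singleton k⟩
    (by rintro a ha b hb rfl; simp_all)

theorem cons_or_one_cons_mem_carlitzSet_of_prefix {P R : List ℕ} {k m : ℕ}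
    (hPR : P ++ R ∈ carlitzSet (m + 1)) (hP : P.sum = k + 1) (hk : 3 ≤ k) :
    k :: R ∈ carlitzSet m ∨ 1 :: (k - 1) :: R ∈ carlitzSet m := by
  by_cases hR : R.head? = some k
  · refine Or.inr (mem_carlitzSet_replace_prefix (Q := [1, k - 1]) hPR hP
      ⟨⟨by simp; omega, by simp; omega⟩, by simp [isCarlitz_iff]; omega⟩ ?_)
    rintro a ha b hb rfl
    simp_all only [List.getLast?_cons_cons, List.getLast?_singleton, Option.mem_def,
      Option.some.injEq]
    omega
  · exact Or.inl (cons_mem_carlitzSet_of_prefix hPR hP (by omega) hR)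

/-- Every Carlitz composition of `m + 1` arises from one of `m` by one of these eight edits of
its first parts (`exists_carlitzExpand_eq`). -/
def carlitzExpand : Fin 8 → List ℕ → List ℕ :=
  ![fun M => 1 :: M,
    fun M => (M.headD 0 + 1) :: M.tail,
    fun M => (M.tail.headD 0 + 2) :: M.drop 2,
    fun M => [3, 2] ++ M.drop 1,
    fun M => [3, 2] ++ M.drop 2,
    fun M => [2, 1] ++ M.drop 1,
    fun M => [2, 1, 2] ++ M.drop 1,
    fun M => [2, 1, 2] ++ M.drop 2]

theorem exists_carlitzExpand_eq {m : ℕ} {N : List ℕ} (hN : N ∈ carlitzSet (m + 1)) :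
    ∃ t, ∃ M ∈ carlitzSet m, carlitzExpand t M = N := by
  obtain ⟨x, R, rfl⟩ : ∃ x R, N = x :: R := by
    cases N with
    | nil => exact absurd hN.1.2 (by simp)
    | cons x R => exact ⟨x, R, rfl⟩
  have hx : 0 < x := hN.1.1 x List.mem_cons_self
  obtain rfl | hx1 := eq_or_ne x 1
  · exact ⟨0, R, mem_carlitzSet_replace_prefix (P := [1]) (Q := []) hN rfl
      ⟨⟨by simp, rfl⟩, List.isChain_nil⟩ (by simp), rfl⟩
  by_cases hR : R.head? = some (x - 1)
  swap
  · exact ⟨1, (x - 1) :: R, cons_mem_carlitzSet_of_prefix (P := [x]) hN (by simp; omega)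
      (by omega) hR, by simp [carlitzExpand]; omega⟩
  obtain ⟨R, rfl⟩ := List.head?_eq_some_iff.1 hR
  rcases (show x = 2 ∨ x = 3 ∨ 4 ≤ x by omega) with rfl | rfl | hx4
  · by_cases hR2 : R.head? = some 2
    swap
    · exact ⟨5, 2 :: R, cons_mem_carlitzSet_of_prefix (P := [2, 1]) hN rfl two_pos hR2, rfl⟩
    obtain ⟨R, rfl⟩ := List.head?_eq_some_iff.1 hR2
    rcases cons_or_one_cons_mem_carlitzSet_of_prefix (P := [2, 1, 2]) (k := 4) hN rfl
      (by norm_num) with h | h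
    exacts [⟨6, _, h, rfl⟩, ⟨7, _, h, rfl⟩]
  · rcases cons_or_one_cons_mem_carlitzSet_of_prefix (P := [3, 2]) (k := 4) hN rfl
      (by norm_num) with h | h
    exacts [⟨3, _, h, rfl⟩, ⟨4, _, h, rfl⟩]
  · rcases cons_or_one_cons_mem_carlitzSet_of_prefix (P := [x]) (k := x - 1) hN
      (by simp; omega) (by omega) with h | h
    · exact ⟨1, _, h, by simp [carlitzExpand]; omega⟩
    · exact ⟨2, _, h, by simp [carlitzExpand]; omega⟩

theorem carlitzCount_succ_le (m : ℕ) : carlitzCount (m + 1) ≤ 8 * carlitzCount m := by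
  set S := (Set.univ : Set (Fin 8)) ×ˢ carlitzSet m
  have hfin : S.Finite := Set.finite_univ.prod (carlitzSet_finite m)
  calc carlitzCount (m + 1)
      ≤ ((fun p : Fin 8 × List ℕ => carlitzExpand p.1 p.2) '' S).ncard := by
        refine Set.ncard_le_ncard (fun N hN => ?_) (hfin.image _)
        obtain ⟨t, M, hM, rfl⟩ := exists_carlitzExpand_eq hN
        exact ⟨(t, M), ⟨trivial, hM⟩, rfl⟩
    _ ≤ S.ncard := Set.ncard_image_le hfin
    _ = 8 * carlitzCount m := by simp [S, Set.ncard_prod, Set.ncard_univ, carlitzCount_eq_ncard]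

theorem carlitzCount_add_le (n k : ℕ) : carlitzCount (n + k) ≤ 8 ^ k * carlitzCount n := by
  induction k with
  | zero => simp
  | succ k ih =>
    calc carlitzCount (n + k + 1) ≤ 8 * carlitzCount (n + k) := carlitzCount_succ_le _
      _ ≤ 8 * (8 ^ k * carlitzCount n) := by gcongr
      _ = 8 ^ (k + 1) * carlitzCount n := by ring

def blockList (s : ℕ) : List Bool → List ℕ
  | [] => [s]
  | b :: bs => (if b then [1, 2, 3] else [1, 3, 2]) ++ blockList s bs

theorem head?_blockList_mem (s : ℕ) (bs : List Bool) :
    ∀ a ∈ (blockList s bs).head?, a = 1 ∨ a = s := by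
  cases bs with
  | nil => simp [blockList]
  | cons b bs => cases b <;> simp [blockList]

theorem blockList_mem_carlitzSet {s : ℕ} (hs : 4 ≤ s) (bs : List Bool) :
    blockList s bs ∈ carlitzSet (6 * bs.length + s) := by
  induction bs with
  | nil =>
    exact ⟨⟨by simp [blockList]; omega, by simp [blockList]⟩, List.isChain_singleton s⟩
  | cons b bs ih =>
    obtain ⟨⟨hpos, hsum⟩, hcar⟩ := ih
    refine ⟨⟨fun x hx => ?_, ?_⟩, ?_⟩
    · rw [blockList, List.mem_append] at hx
      rcases hx with hx | hx
      · cases b <;> simp at hx <;> omega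
      · exact hpos x hx
    · cases b <;> simp [blockList, hsum] <;> ring
    · rw [isCarlitz_iff, blockList, List.isChain_append]
      refine ⟨by cases b <;> simp, hcar, fun x hx y hy => ?_⟩
      rcases head?_blockList_mem s bs y hy with rfl | rfl <;> cases b <;> simp at hx <;> omega

theorem blockList_injective (s : ℕ) : Function.Injective (blockList s) := by
  intro bs
  induction bs with
  | nil => rintro (_ | ⟨b, _⟩) h <;> [rfl; cases b <;> simp [blockList] at h]
  | cons b bs ih =>
    rintro (_ | ⟨b', bs'⟩) h
    · cases b <;> simp [blockList] at h
    · cases b <;> cases b' <;> simp [blockList] at h <;> rw [ih h]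

theorem two_pow_le_carlitzCount {k n : ℕ} (h : 6 * (k + 1) ≤ n) : 2 ^ k ≤ carlitzCount n := by
  calc 2 ^ k = (Set.univ : Set (Fin k → Bool)).ncard := by simp [Set.ncard_univ]
    _ ≤ (carlitzSet n).ncard := by
        refine Set.ncard_le_ncard_of_injOn (fun v => blockList (n - 6 * k) (List.ofFn v))
          (fun v _ => ?_) (fun v _ w _ hvw => List.ofFn_injective (blockList_injective _ hvw))
          (carlitzSet_finite n)
        convert blockList_mem_carlitzSet (s := n - 6 * k) (by omega) (List.ofFn v) using 2
        simp only [List.length_ofFn]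
        omega

theorem pow_le_four_mul_carlitzCount {n : ℕ} (hn : 6 ≤ n) :
    ((2 : ℝ) ^ (6⁻¹ : ℝ)) ^ n ≤ 4 * carlitzCount n := by
  set r := (2 : ℝ) ^ (6⁻¹ : ℝ)
  have hr : 1 ≤ r := Real.one_le_rpow (by norm_num) (by norm_num)
  have hr6 : r ^ 6 = 2 := by
    simpa using Real.rpow_inv_natCast_pow (x := 2) (n := 6) (by norm_num) (by norm_num)
  calc r ^ n ≤ r ^ (6 * (n / 6 - 1 + 2)) := pow_le_pow_right₀ hr (by omega)
    _ = 4 * 2 ^ (n / 6 - 1) := by rw [pow_mul, hr6, pow_add]; ring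
    _ ≤ 4 * carlitzCount n := by
        gcongr
        exact_mod_cast two_pow_le_carlitzCount (by omega)

theorem tendsto_pow_div_carlitzCount (T : ℕ) :
    Tendsto (fun n : ℕ => ((n : ℝ) + 1) ^ T / carlitzCount n) atTop (𝓝 0) := by
  set r := (2 : ℝ) ^ (6⁻¹ : ℝ)
  have hr : 1 < r := Real.one_lt_rpow (by norm_num) (by norm_num)
  have hpoly : Tendsto (fun n : ℕ => ((n : ℝ) + 1) ^ T / r ^ n) atTop (𝓝 0) := by
    have := ((tendsto_pow_const_div_const_pow_of_one_lt T hr).comp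
      (tendsto_add_atTop_nat 1)).const_mul r
    rw [mul_zero] at this
    refine this.congr fun n => ?_
    simp only [Function.comp_apply, Nat.cast_add, Nat.cast_one, pow_succ]
    field_simp
  refine squeeze_zero' (Eventually.of_forall fun n => by positivity) ?_
    (by simpa using hpoly.const_mul 4)
  filter_upwards [eventually_ge_atTop 6] with n hn
  have hbound : r ^ n ≤ 4 * carlitzCount n := pow_le_four_mul_carlitzCount hn
  calc ((n : ℝ) + 1) ^ T / carlitzCount n ≤ ((n : ℝ) + 1) ^ T / (r ^ n / 4) :=
        div_le_div_of_nonneg_left (by positivity) (by positivity) (by linarith)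
    _ = 4 * (((n : ℝ) + 1) ^ T / r ^ n) := by field_simp

theorem tendsto_zero_of_le_add {α β : Type*} {l : Filter α} {l' : Filter β} [l'.NeBot]
    {f : α → ℝ} {g : β → α → ℝ} {c : β → ℝ} (hf : ∀ n, 0 ≤ f n)
    (hg : ∀ T, Tendsto (g T) l (𝓝 0)) (hc : Tendsto c l' (𝓝 0))
    (hfg : ∀ T, ∀ᶠ n in l, f n ≤ g T n + c T) : Tendsto f l (𝓝 0) := by
  refine tendsto_order.2 ⟨fun a ha => Eventually.of_forall fun n => ha.trans_le (hf n),
    fun ε hε => ?_⟩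
  obtain ⟨T, hT⟩ := (hc.eventually (gt_mem_nhds (half_pos hε))).exists
  filter_upwards [hfg T, (hg T).eventually (gt_mem_nhds (half_pos hε))] with n h1 h2
  linarith

theorem small_j_ratio_tendsto_zero_general (j : ℕ) (hj1 : 1 ≤ j) :
    Tendsto (fun n : ℕ => (carlitzCountAvoid n j : ℝ) / (carlitzCount n : ℝ))
      atTop (nhds 0) := by
  have hc : Tendsto (fun T : ℕ => (8 : ℝ) ^ j / (T + 1)) atTop (𝓝 0) := by
    simpa [div_eq_mul_inv] using
      tendsto_one_div_add_atTop_nhds_zero_nat.const_mul ((8 : ℝ) ^ j)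
  refine tendsto_zero_of_le_add (fun n => by positivity) tendsto_pow_div_carlitzCount hc
    fun T => ?_
  filter_upwards [eventually_ge_atTop 6] with n hn
  have hA : (0 : ℝ) < carlitzCount n := by
    exact_mod_cast two_pow_le_carlitzCount (k := 0) (by omega)
  have key : ((T : ℝ) + 1) * carlitzCountAvoid n j ≤
      (T + 1) * ((n : ℝ) + 1) ^ T + 8 ^ j * carlitzCount n := by
    exact_mod_cast (carlitzCountAvoid_mul_le hj1 n T).trans
      (Nat.add_le_add_left (carlitzCount_add_le n j) _)
  rw [div_add_div _ _ hA.ne' (by positivity), div_le_div_iff₀ hA (by positivity)]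
  nlinarith [mul_le_mul_of_nonneg_left key hA.le]

/-- For each fixed `j` with `1 ≤ j ≤ 5`, `a_{n,j}/a_n → 0` as `n → ∞`. -/
theorem small_j_ratio_tendsto_zero (j : ℕ) (hj1 : 1 ≤ j) (hj5 : j ≤ 5) :
    Tendsto (fun n : ℕ => (carlitzCountAvoid n j : ℝ) / (carlitzCount n : ℝ))
      atTop (nhds 0) :=
  small_j_ratio_tendsto_zero_general j hj1
end

section
/- For every integer j ≥ 6 and every complex number z with |z| = 0.663, one has | ∑_{m=7}^{∞} z^m/(1+z^m) - z^j/(1-z^j) | ≤ 0.27. -/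
/-- For every `j ≥ 6` and `|z| = 0.663`,
`|∑_{m=7}^∞ z^m/(1+z^m) - z^j/(1-z^j)| ≤ 0.27`. -/
theorem g_upper_bound_on_circle (j : ℕ) (hj : 6 ≤ j)
    (z : ℂ) (hz : ‖z‖ = 0.663) :
    ‖(∑' m : ℕ, z ^ (m + 7) / (1 + z ^ (m + 7))) -
        z ^ j / (1 - z ^ j)‖ ≤ 0.27 := by
  set r : ℝ := 0.663 with hr
  have hr0 : (0:ℝ) ≤ r := by norm_num [hr]
  have hr1 : r < 1 := by norm_num [hr]
  have habs : ∀ n : ℕ, ‖z ^ n‖ = r ^ n := by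
    intro n; rw [norm_pow, hz]
  have hlow : ∀ n : ℕ, 1 - r ^ n ≤ ‖1 + z ^ n‖ := by
    intro n
    have h := norm_add_le (1 + z ^ n) (-(z ^ n))
    simp only [add_neg_cancel_right, norm_neg, norm_one, habs] at h
    linarith
  have hlow' : ∀ n : ℕ, 1 - r ^ n ≤ ‖1 - z ^ n‖ := by
    intro n
    have h := norm_add_le (1 - z ^ n) (z ^ n)
    simp only [sub_add_cancel, norm_one, habs] at h
    linarith
  have h7 : (0:ℝ) < 1 - r ^ 7 := by norm_num [hr]
  have h6 : (0:ℝ) < 1 - r ^ 6 := by norm_num [hr]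
  set C : ℝ := r ^ 7 / (1 - r ^ 7) with hC
  -- pointwise bound on the series terms
  have hterm : ∀ m : ℕ, ‖z ^ (m + 7) / (1 + z ^ (m + 7))‖ ≤ C * r ^ m := by
    intro m
    rw [norm_div, habs]
    have hle7 : r ^ (m + 7) ≤ r ^ 7 := pow_le_pow_of_le_one hr0 hr1.le (by omega)
    have hd : 1 - r ^ 7 ≤ ‖1 + z ^ (m + 7)‖ :=
      le_trans (by linarith) (hlow (m + 7))
    have : r ^ (m + 7) / ‖1 + z ^ (m + 7)‖ ≤ r ^ (m + 7) / (1 - r ^ 7) :=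
      div_le_div_of_nonneg_left (by positivity) h7 hd
    calc r ^ (m + 7) / ‖1 + z ^ (m + 7)‖ ≤ r ^ (m + 7) / (1 - r ^ 7) := this
      _ = C * r ^ m := by rw [hC, pow_add]; ring
  have hgeo : Summable fun m : ℕ => C * r ^ m :=
    (summable_geometric_of_lt_one hr0 hr1).mul_left C
  have hnn : ∀ m : ℕ, 0 ≤ ‖z ^ (m + 7) / (1 + z ^ (m + 7))‖ :=
    fun m => norm_nonneg _
  have hsum : Summable fun m : ℕ => ‖z ^ (m + 7) / (1 + z ^ (m + 7))‖ :=
    Summable.of_nonneg_of_le hnn hterm hgeo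
  have hA : ‖∑' m : ℕ, z ^ (m + 7) / (1 + z ^ (m + 7))‖ ≤ C / (1 - r) := by
    have h1 : ‖∑' m : ℕ, z ^ (m + 7) / (1 + z ^ (m + 7))‖ ≤
        ∑' m : ℕ, ‖z ^ (m + 7) / (1 + z ^ (m + 7))‖ := by
      apply norm_tsum_le_tsum_norm
      simpa using hsum
    refine h1.trans ?_
    have h2 : (∑' m : ℕ, ‖z ^ (m + 7) / (1 + z ^ (m + 7))‖) ≤ ∑' m : ℕ, C * r ^ m := by
      apply Summable.tsum_le_tsum _ (by simpa using hsum) hgeo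
      intro m; simpa using hterm m
    refine h2.trans ?_
    rw [tsum_mul_left, tsum_geometric_of_lt_one hr0 hr1]
    rw [div_eq_mul_inv]
  have hB : ‖z ^ j / (1 - z ^ j)‖ ≤ r ^ 6 / (1 - r ^ 6) := by
    rw [norm_div, habs]
    have hle6 : r ^ j ≤ r ^ 6 := pow_le_pow_of_le_one hr0 hr1.le hj
    have hd : 1 - r ^ 6 ≤ ‖1 - z ^ j‖ :=
      le_trans (by linarith) (hlow' j)
    exact div_le_div₀ (by positivity) hle6 h6 hd
  calc ‖(∑' m : ℕ, z ^ (m + 7) / (1 + z ^ (m + 7))) - z ^ j / (1 - z ^ j)‖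
      ≤ ‖∑' m : ℕ, z ^ (m + 7) / (1 + z ^ (m + 7))‖ +
        ‖z ^ j / (1 - z ^ j)‖ := norm_sub_le _ _
    _ ≤ C / (1 - r) + r ^ 6 / (1 - r ^ 6) := add_le_add hA hB
    _ ≤ 0.27 := by rw [hC, hr]; norm_num
end

section
/- For every real number α with 0 < α < 1/2 there exists a constant C > 0 such that for all positive integers n, the number of compositions of n in which every part is at least 2 is at most C · 2^{n-1} · ( e^{-2α²n} + 2^{-(1/2-α)n} ). -/
/-!
Compositions of `n + 2` without ones come either from a composition of `n + 1` without ones by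
raising its first part, or from one of `n` by prepending a `2`; hence there are at most `φ ^ n`
of them. Then `φ ^ n ≤ 2 ^ n e^{-2α²n}` when `α ≤ 1/4`, because `φ / 2 < 7 / 8 ≤ e^{-2α²}`, and
`φ ^ n ≤ 2 ^ n 2^{-(1/2-α)n}` when `α ≥ 1/4`, because `φ ^ 4 = 3φ + 2 < 8`.
-/

open Real goldenRatio

abbrev CompositionsWithoutOnes (n : ℕ) : Type :=
  {L : List ℕ // IsComposition n L ∧ ∀ x ∈ L, 2 ≤ x}

namespace CompositionsWithoutOnes

lemma isComposition_and_two_le_iff {n : ℕ} {L : List ℕ} :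
    IsComposition n L ∧ (∀ x ∈ L, 2 ≤ x) ↔ L.sum = n ∧ ∀ x ∈ L, 2 ≤ x :=
  ⟨fun ⟨⟨_, hsum⟩, hge⟩ => ⟨hsum, hge⟩,
    fun ⟨hsum, hge⟩ => ⟨⟨fun x hx => by linarith [hge x hx], hsum⟩, hge⟩⟩

instance (n : ℕ) : Finite (CompositionsWithoutOnes n) :=
  Finite.of_injective (fun L => (⟨L.1, fun hi => L.2.1.1 _ hi, L.2.1.2⟩ : Composition n))
    fun _ _ h => Subtype.ext (congrArg Composition.blocks h)

lemma card_le_one_of_lt_two {n : ℕ} (hn : n < 2) : Nat.card (CompositionsWithoutOnes n) ≤ 1 := by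
  suffices h : ∀ L : CompositionsWithoutOnes n, L.1 = [] from
    Finite.card_le_one_iff_subsingleton.2 ⟨fun L M => Subtype.ext ((h L).trans (h M).symm)⟩
  rintro ⟨_ | ⟨a, t⟩, hL⟩
  · rfl
  · obtain ⟨hsum, hge⟩ := isComposition_and_two_le_iff.1 hL
    have := hge a List.mem_cons_self
    simp only [List.sum_cons] at hsum
    omega

def extend (n : ℕ) :
    CompositionsWithoutOnes (n + 1) ⊕ CompositionsWithoutOnes n → CompositionsWithoutOnes (n + 2)
  | .inl L => ⟨L.1.modifyHead (· + 1), by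
      obtain ⟨_ | ⟨a, t⟩, hL⟩ := L
      · simp [IsComposition] at hL
      · obtain ⟨hsum, hge⟩ := isComposition_and_two_le_iff.1 hL
        refine isComposition_and_two_le_iff.2 ⟨?_, ?_⟩
        · simp only [List.modifyHead_cons, List.sum_cons] at hsum ⊢; omega
        · simp only [List.modifyHead_cons, List.mem_cons, forall_eq_or_imp] at hge ⊢
          exact ⟨by omega, hge.2⟩⟩
  | .inr L => ⟨2 :: L.1, by
      obtain ⟨hsum, hge⟩ := isComposition_and_two_le_iff.1 L.2
      refine isComposition_and_two_le_iff.2 ⟨?_, ?_⟩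
      · simp only [List.sum_cons, hsum]; omega
      · simpa using hge⟩

lemma extend_surjective (n : ℕ) : Function.Surjective (extend n) := by
  rintro ⟨_ | ⟨a, t⟩, hM⟩ <;> obtain ⟨hsum, hge⟩ := isComposition_and_two_le_iff.1 hM
  · simp at hsum
  · simp only [List.sum_cons, List.mem_cons, forall_eq_or_imp] at hsum hge
    obtain rfl | ha := eq_or_ne a 2
    · refine ⟨.inr ⟨t, isComposition_and_two_le_iff.2 ⟨?_, hge.2⟩⟩, rfl⟩
      omega
    · refine ⟨.inl ⟨(a - 1) :: t, isComposition_and_two_le_iff.2 ⟨?_, ?_⟩⟩, ?_⟩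
      · simp only [List.sum_cons]; omega
      · simp only [List.mem_cons, forall_eq_or_imp]; exact ⟨by omega, hge.2⟩
      · simp only [extend, List.modifyHead_cons, Subtype.mk.injEq, List.cons.injEq, and_true]
        omega

lemma card_add_two_le (n : ℕ) :
    Nat.card (CompositionsWithoutOnes (n + 2)) ≤
      Nat.card (CompositionsWithoutOnes (n + 1)) + Nat.card (CompositionsWithoutOnes n) :=
  Nat.card_sum (α := CompositionsWithoutOnes (n + 1)) (β := CompositionsWithoutOnes n) ▸
    Nat.card_le_card_of_surjective _ (extend_surjective n)

lemma card_le_goldenRatio_pow : ∀ n : ℕ, (Nat.card (CompositionsWithoutOnes n) : ℝ) ≤ φ ^ n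
  | 0 | 1 =>
    (Nat.cast_le_one.2 (card_le_one_of_lt_two (by norm_num))).trans
      (one_le_pow₀ one_lt_goldenRatio.le)
  | n + 2 => calc
    (Nat.card (CompositionsWithoutOnes (n + 2)) : ℝ)
        ≤ Nat.card (CompositionsWithoutOnes (n + 1)) + Nat.card (CompositionsWithoutOnes n) := by
      exact_mod_cast card_add_two_le n
    _ ≤ φ ^ (n + 1) + φ ^ n := add_le_add (card_le_goldenRatio_pow _) (card_le_goldenRatio_pow _)
    _ = φ ^ (n + 2) := by linarith [goldenRatio_pow_sub_goldenRatio_pow n]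

end CompositionsWithoutOnes

lemma goldenRatio_le_two_mul_exp {α : ℝ} (hα : α ^ 2 ≤ 1 / 16) : φ ≤ 2 * exp (-2 * α ^ 2) := by
  have hsqrt : √5 ≤ 5 / 2 := by nlinarith [sq_sqrt (show (0 : ℝ) ≤ 5 by norm_num), sqrt_nonneg 5]
  have hexp := add_one_le_exp (-2 * α ^ 2)
  show (1 + √5) / 2 ≤ _
  linarith

lemma goldenRatio_le_two_rpow {α : ℝ} (hα : 1 / 4 ≤ α) : φ ≤ 2 ^ (1 / 2 + α) := by
  have h8 : ((2 : ℝ) ^ (3 / 4 : ℝ)) ^ 4 = 8 := by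
    rw [← rpow_natCast, ← rpow_mul zero_le_two]
    norm_num
  have hfourth : φ ^ 4 ≤ ((2 : ℝ) ^ (3 / 4 : ℝ)) ^ 4 := by
    rw [h8]
    nlinarith [goldenRatio_sq, goldenRatio_lt_two]
  calc φ ≤ (2 : ℝ) ^ (3 / 4 : ℝ) := le_of_pow_le_pow_left₀ four_ne_zero (by positivity) hfourth
    _ ≤ 2 ^ (1 / 2 + α) := rpow_le_rpow_of_exponent_le one_le_two (by linarith)

lemma goldenRatio_pow_le {α : ℝ} (hα : 0 < α) (n : ℕ) :
    φ ^ n ≤ 2 ^ n * (exp (-2 * α ^ 2 * n) + 2 ^ (-(1 / 2 - α) * n)) := by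
  have hE : 0 < exp (-2 * α ^ 2 * n) := exp_pos _
  have hT : 0 < (2 : ℝ) ^ (-(1 / 2 - α) * n) := rpow_pos_of_pos two_pos _
  rcases le_total α (1 / 4) with hsmall | hlarge
  · calc φ ^ n ≤ (2 * exp (-2 * α ^ 2)) ^ n :=
          pow_le_pow_left₀ goldenRatio_pos.le (goldenRatio_le_two_mul_exp (by nlinarith)) n
      _ = 2 ^ n * exp (-2 * α ^ 2 * n) := by rw [mul_pow, ← exp_nat_mul, mul_comm (n : ℝ)]
      _ ≤ _ := by gcongr; linarith
  · calc φ ^ n ≤ ((2 : ℝ) ^ (1 / 2 + α)) ^ n :=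
          pow_le_pow_left₀ goldenRatio_pos.le (goldenRatio_le_two_rpow hlarge) n
      _ = 2 ^ n * 2 ^ (-(1 / 2 - α) * n) := by
        rw [← rpow_natCast _ n, ← rpow_mul zero_le_two, ← rpow_natCast 2 n, ← rpow_add two_pos]
        ring_nf
      _ ≤ _ := by gcongr; linarith

theorem compositions_without_ones_bound_general (α : ℝ) (hα0 : 0 < α) :
    ∃ C : ℝ, 0 < C ∧ ∀ n : ℕ, 0 < n →
      (Nat.card {L : List ℕ // IsComposition n L ∧ ∀ x ∈ L, 2 ≤ x} : ℝ) ≤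
        C * 2 ^ (n - 1) *
          (Real.exp (-2 * α ^ 2 * n) + (2 : ℝ) ^ (-(1 / 2 - α) * n)) := by
  refine ⟨2, two_pos, fun n hn => ?_⟩
  calc (Nat.card (CompositionsWithoutOnes n) : ℝ) ≤ φ ^ n :=
        CompositionsWithoutOnes.card_le_goldenRatio_pow n
    _ ≤ 2 ^ n * (exp (-2 * α ^ 2 * n) + 2 ^ (-(1 / 2 - α) * n)) := goldenRatio_pow_le hα0 n
    _ = 2 * 2 ^ (n - 1) * (exp (-2 * α ^ 2 * n) + 2 ^ (-(1 / 2 - α) * n)) := by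
      rw [← pow_succ', Nat.sub_add_cancel hn]

/-- For every `0 < α < 1/2` there is a constant `C > 0` such that the number
of compositions of `n` all of whose parts are at least `2` is at most
`C · 2^{n-1} · (e^{-2α²n} + 2^{-(1/2-α)n})`. -/
theorem compositions_without_ones_bound (α : ℝ) (hα0 : 0 < α) (hα : α < 1 / 2) :
    ∃ C : ℝ, 0 < C ∧ ∀ n : ℕ, 0 < n →
      (Nat.card {L : List ℕ // IsComposition n L ∧ ∀ x ∈ L, 2 ≤ x} : ℝ) ≤
        C * 2 ^ (n - 1) *
          (Real.exp (-2 * α ^ 2 * n) + (2 : ℝ) ^ (-(1 / 2 - α) * n)) :=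
  compositions_without_ones_bound_general α hα0
end
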